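/- arXiv:2104.08905 — 13 statements merged into one kernel-verified Lean document; each statement's English description precedes it below -/
import Mathlib

section
/- Let M be an n×n binary matrix that is k-uniform, and suppose that for every j with 1 ≤ j ≤ n−1 there exists an assignment mapping φ_j for M satisfying Condition (2). Then for every j with 1 ≤ j ≤ n−1 there exists an assignment mapping ψ_j for M satisfying both Condition (2) and Condition (1), i.e. ψ_j(i) = i if and only if m_{i,j} = m_{i,j+1} = 1. -/
/-- `M` is a binary (0/1) matrix. -/
def IsBinary {n : ℕ} (M : Fin n → Fin n → ℕ) : Prop :=
  ∀ i j, M i j = 0 ∨ M i j = 1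

/-- Every row and every column of `M` contains exactly `k` entries equal to `1`. -/
def IsUniform {n : ℕ} (k : ℕ) (M : Fin n → Fin n → ℕ) : Prop :=
  (∀ i, (Finset.univ.filter fun j => M i j = 1).card = k) ∧
  (∀ j, (Finset.univ.filter fun i => M i j = 1).card = k)

/-- Partial row sum `S_{i,j}`: sum of the entries of row `i` in columns `≤ j`. -/
def RowSum {n : ℕ} (M : Fin n → Fin n → ℕ) (i j : Fin n) : ℕ :=
  ∑ l ∈ Finset.Iic j, M i l

/-- An assignment mapping between columns `j` and `j'`: a bijection from
`{i : M i j = 1}` onto `{i : M i j' = 1}`. -/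
def IsAssignment {n : ℕ} (M : Fin n → Fin n → ℕ) (j j' : Fin n) (φ : Fin n → Fin n) : Prop :=
  Set.BijOn φ {i | M i j = 1} {i | M i j' = 1}

/-- Condition (2): `S_{φ(i),j} ≤ S_{i,j}` for all `i` in the domain. -/
def Cond2 {n : ℕ} (M : Fin n → Fin n → ℕ) (j : Fin n) (φ : Fin n → Fin n) : Prop :=
  ∀ i, M i j = 1 → RowSum M (φ i) j ≤ RowSum M i j

/-- Condition (1): `φ(i) = i` exactly when `m_{i,j} = m_{i,j'} = 1`. -/
def Cond1 {n : ℕ} (M : Fin n → Fin n → ℕ) (j j' : Fin n) (φ : Fin n → Fin n) : Prop :=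
  ∀ i, M i j = 1 → (φ i = i ↔ (M i j = 1 ∧ M i j' = 1))

/-- `M` is optimal: it is `k`-uniform for some `k`, and between each pair of consecutive
columns there is an assignment mapping satisfying Condition (2). -/
def Optimal {n : ℕ} (M : Fin n → Fin n → ℕ) : Prop :=
  (∃ k, IsUniform k M) ∧
  ∀ j : ℕ, ∀ hj : j + 1 < n, ∃ φ : Fin n → Fin n,
    IsAssignment M ⟨j, Nat.lt_of_succ_lt hj⟩ ⟨j + 1, hj⟩ φ ∧
    Cond2 M ⟨j, Nat.lt_of_succ_lt hj⟩ φ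

open Finset in
open Finset

lemma stmt_0key {n : ℕ} (S : Fin n → ℕ) :
    ∀ m (A B : Finset (Fin n)), A.card = m → B.card = m →
    (∀ t, (A.filter (fun a => S a ≤ t)).card ≤ (B.filter (fun b => S b ≤ t)).card) →
    ∃ f : Fin n → Fin n, Set.BijOn f ↑A ↑B ∧ ∀ a ∈ A, S (f a) ≤ S a := by
  intro m
  induction m with
  | zero =>
    intro A B hA hB _
    rw [Finset.card_eq_zero] at hA hB
    subst hA; subst hB
    exact ⟨id, by simp [Set.bijOn_empty], by simp⟩
  | succ m ih =>
    intro A B hA hB hcount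
    have hAne : A.Nonempty := Finset.card_pos.mp (by omega)
    obtain ⟨i₀, hi₀A, hi₀max⟩ := A.exists_max_image S hAne
    -- B has an element with S ≤ S i₀
    have h1 : 0 < (B.filter (fun b => S b ≤ S i₀)).card := by
      have := hcount (S i₀)
      have : 0 < (A.filter (fun a => S a ≤ S i₀)).card :=
        Finset.card_pos.mpr ⟨i₀, Finset.mem_filter.mpr ⟨hi₀A, le_refl _⟩⟩
      omega
    obtain ⟨b₀, hb₀mem, hb₀max⟩ :=
      (B.filter (fun b => S b ≤ S i₀)).exists_max_image S (Finset.card_pos.mp h1)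
    have hb₀B : b₀ ∈ B := (Finset.mem_filter.mp hb₀mem).1
    have hb₀le : S b₀ ≤ S i₀ := (Finset.mem_filter.mp hb₀mem).2
    -- counting for erased sets
    have hcount' : ∀ t, ((A.erase i₀).filter (fun a => S a ≤ t)).card ≤
        ((B.erase b₀).filter (fun b => S b ≤ t)).card := by
      intro t
      rw [Finset.filter_erase, Finset.filter_erase]
      by_cases ht : S i₀ ≤ t
      · have hiA : i₀ ∈ A.filter (fun a => S a ≤ t) := Finset.mem_filter.mpr ⟨hi₀A, ht⟩
        have hbB : b₀ ∈ B.filter (fun b => S b ≤ t) :=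
          Finset.mem_filter.mpr ⟨hb₀B, le_trans hb₀le ht⟩
        rw [Finset.card_erase_of_mem hiA, Finset.card_erase_of_mem hbB]
        exact Nat.sub_le_sub_right (hcount t) 1
      · push_neg at ht
        have hiA : i₀ ∉ A.filter (fun a => S a ≤ t) := by
          simp only [Finset.mem_filter]; rintro ⟨_, h⟩; omega
        rw [Finset.erase_eq_of_notMem hiA]
        by_cases hbt : S b₀ ≤ t
        · have hbB : b₀ ∈ B.filter (fun b => S b ≤ t) := Finset.mem_filter.mpr ⟨hb₀B, hbt⟩
          rw [Finset.card_erase_of_mem hbB]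
          -- need card A.filter(≤t) + 1 ≤ card B.filter(≤t)
          have hsub : insert i₀ (A.filter (fun a => S a ≤ t)) ⊆
              A.filter (fun a => S a ≤ S i₀) := by
            intro x hx
            rcases Finset.mem_insert.mp hx with rfl | hx
            · exact Finset.mem_filter.mpr ⟨hi₀A, le_refl _⟩
            · obtain ⟨hxA, hxt⟩ := Finset.mem_filter.mp hx
              exact Finset.mem_filter.mpr ⟨hxA, le_of_lt (lt_of_le_of_lt hxt ht)⟩
          have h2 : (A.filter (fun a => S a ≤ t)).card + 1 ≤
              (A.filter (fun a => S a ≤ S i₀)).card := by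
            have := Finset.card_le_card hsub
            rwa [Finset.card_insert_of_notMem hiA] at this
          have h3 : B.filter (fun b => S b ≤ S i₀) = B.filter (fun b => S b ≤ t) := by
            apply Finset.ext
            intro b
            simp only [Finset.mem_filter]
            constructor
            · rintro ⟨hbB', hb'⟩
              refine ⟨hbB', ?_⟩
              have := hb₀max b (Finset.mem_filter.mpr ⟨hbB', hb'⟩)
              omega
            · rintro ⟨hbB', hb'⟩; exact ⟨hbB', by omega⟩
          have := hcount (S i₀)
          rw [h3] at this
          omega
        · have hbB : b₀ ∉ B.filter (fun b => S b ≤ t) := by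
            simp only [Finset.mem_filter]; rintro ⟨_, h⟩; omega
          rw [Finset.erase_eq_of_notMem hbB]
          exact hcount t
    obtain ⟨f, hfbij, hfle⟩ := ih (A.erase i₀) (B.erase b₀)
      (by rw [Finset.card_erase_of_mem hi₀A, hA]; rfl)
      (by rw [Finset.card_erase_of_mem hb₀B, hB]; rfl) hcount'
    classical
    refine ⟨fun a => if a = i₀ then b₀ else f a, ⟨?_, ?_, ?_⟩, ?_⟩
    · intro a ha
      simp only [Finset.coe_insert, Set.mem_setOf_eq]
      by_cases hai : a = i₀
      · simp [hai, hb₀B]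
      · simp only [if_neg hai]
        have : f a ∈ (B.erase b₀ : Finset (Fin n)) := by
          exact_mod_cast hfbij.mapsTo (by
            simp only [Finset.coe_erase, Set.mem_diff, Set.mem_singleton_iff]
            exact ⟨ha, hai⟩)
        exact Finset.mem_coe.mpr (Finset.mem_of_mem_erase this)
    · intro a ha a' ha' heq
      by_cases hai : a = i₀ <;> by_cases hai' : a' = i₀
      · rw [hai, hai']
      · exfalso
        simp only [if_pos hai, if_neg hai'] at heq
        have : f a' ∈ (↑(B.erase b₀) : Set (Fin n)) := hfbij.mapsTo (by
          simp only [Finset.coe_erase, Set.mem_diff, Set.mem_singleton_iff]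
          exact ⟨ha', hai'⟩)
        rw [← heq] at this
        simp at this
      · exfalso
        simp only [if_neg hai, if_pos hai'] at heq
        have : f a ∈ (↑(B.erase b₀) : Set (Fin n)) := hfbij.mapsTo (by
          simp only [Finset.coe_erase, Set.mem_diff, Set.mem_singleton_iff]
          exact ⟨ha, hai⟩)
        rw [heq] at this
        simp at this
      · simp only [if_neg hai, if_neg hai'] at heq
        exact hfbij.injOn (by
            simp only [Finset.coe_erase, Set.mem_diff, Set.mem_singleton_iff]
            exact ⟨ha, hai⟩)
          (by
            simp only [Finset.coe_erase, Set.mem_diff, Set.mem_singleton_iff]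
            exact ⟨ha', hai'⟩) heq
    · intro b hb
      by_cases hbb : b = b₀
      · exact ⟨i₀, Finset.mem_coe.mpr hi₀A, by simp [hbb]⟩
      · obtain ⟨a, ha, hfa⟩ := hfbij.surjOn (by
          simp only [Finset.coe_erase, Set.mem_diff, Set.mem_singleton_iff]
          exact ⟨hb, hbb⟩)
        simp only [Finset.coe_erase, Set.mem_diff, Set.mem_singleton_iff] at ha
        exact ⟨a, Finset.mem_coe.mpr (by exact_mod_cast ha.1), by simp [ha.2, hfa]⟩
    · intro a ha
      by_cases hai : a = i₀
      · simpa [hai] using hb₀le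
      · simp only [if_neg hai]
        exact hfle a (Finset.mem_erase.mpr ⟨hai, ha⟩)


open Finset in

theorem stmt_0'aux {n : ℕ} (M : Fin n → Fin n → ℕ) {k : ℕ}
    (hunif : (∀ i, (Finset.univ.filter fun j => M i j = 1).card = k) ∧
      (∀ j, (Finset.univ.filter fun i => M i j = 1).card = k))
    (j₁ j₂ : Fin n) (φ : Fin n → Fin n)
    (hφ : Set.BijOn φ {i | M i j₁ = 1} {i | M i j₂ = 1})
    (hφ2 : ∀ i, M i j₁ = 1 → (∑ l ∈ Finset.Iic j₁, M (φ i) l) ≤ ∑ l ∈ Finset.Iic j₁, M i l) :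
    ∃ ψ : Fin n → Fin n, Set.BijOn ψ {i | M i j₁ = 1} {i | M i j₂ = 1} ∧
      (∀ i, M i j₁ = 1 → (∑ l ∈ Finset.Iic j₁, M (ψ i) l) ≤ ∑ l ∈ Finset.Iic j₁, M i l) ∧
      (∀ i, M i j₁ = 1 → (ψ i = i ↔ (M i j₁ = 1 ∧ M i j₂ = 1))) := by
  classical
  set S : Fin n → ℕ := fun i => ∑ l ∈ Finset.Iic j₁, M i l with hS
  set A : Finset (Fin n) := Finset.univ.filter (fun i => M i j₁ = 1) with hAdef
  set B : Finset (Fin n) := Finset.univ.filter (fun i => M i j₂ = 1) with hBdef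
  have hmemA : ∀ i, i ∈ A ↔ M i j₁ = 1 := by intro i; simp [hAdef]
  have hmemB : ∀ i, i ∈ B ↔ M i j₂ = 1 := by intro i; simp [hBdef]
  have hcardA : A.card = k := hunif.2 j₁
  have hcardB : B.card = k := hunif.2 j₂
  -- counting for A, B
  have hcountAB : ∀ t, (A.filter (fun a => S a ≤ t)).card ≤
      (B.filter (fun b => S b ≤ t)).card := by
    intro t
    apply Finset.card_le_card_of_injOn φ
    · intro a ha
      obtain ⟨haA, hat⟩ := Finset.mem_filter.mp ha
      refine Finset.mem_filter.mpr ⟨?_, ?_⟩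
      · exact (hmemB _).mpr (hφ.mapsTo ((hmemA _).mp haA))
      · exact le_trans (hφ2 a ((hmemA _).mp haA)) hat
    · intro a ha a' ha' heq
      exact hφ.injOn ((hmemA _).mp (Finset.mem_filter.mp ha).1)
        ((hmemA _).mp (Finset.mem_filter.mp ha').1) heq
  -- counting and card equality for A', B'
  have hsplit : ∀ (P : Fin n → Prop) [DecidablePred P],
      ((A \ B).filter P).card + ((A.filter P) ∩ (B.filter P)).card = (A.filter P).card := by
    intro P _
    have h1 : (A \ B).filter P = (A.filter P) \ (B.filter P) := by
      ext x
      simp only [Finset.mem_filter, Finset.mem_sdiff]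
      tauto
    rw [h1]
    exact Finset.card_sdiff_add_card_inter _ _
  have hsplitB : ∀ (P : Fin n → Prop) [DecidablePred P],
      ((B \ A).filter P).card + ((A.filter P) ∩ (B.filter P)).card = (B.filter P).card := by
    intro P _
    have h1 : (B \ A).filter P = (B.filter P) \ (A.filter P) := by
      ext x
      simp only [Finset.mem_filter, Finset.mem_sdiff]
      tauto
    rw [h1, Finset.inter_comm]
    exact Finset.card_sdiff_add_card_inter _ _
  have hcount' : ∀ t, ((A \ B).filter (fun a => S a ≤ t)).card ≤
      ((B \ A).filter (fun b => S b ≤ t)).card := by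
    intro t
    have h1 := hsplit (fun a => S a ≤ t)
    have h2 := hsplitB (fun a => S a ≤ t)
    have h3 := hcountAB t
    omega
  have hcard' : (A \ B).card = (B \ A).card := by
    have h1 : (A \ B).card + (A ∩ B).card = A.card := Finset.card_sdiff_add_card_inter _ _
    have h2 : (B \ A).card + (B ∩ A).card = B.card := Finset.card_sdiff_add_card_inter _ _
    rw [Finset.inter_comm] at h2
    omega
  obtain ⟨f, hfbij, hfle⟩ := stmt_0key S (A \ B).card (A \ B) (B \ A) rfl hcard'.symm hcount'
  have hmemA' : ∀ i, (i ∈ (↑(A \ B) : Set (Fin n))) ↔ (M i j₁ = 1 ∧ ¬ M i j₂ = 1) := by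
    intro i; simp [hAdef, hBdef]
  have hmemB' : ∀ i, (i ∈ (↑(B \ A) : Set (Fin n))) ↔ (M i j₂ = 1 ∧ ¬ M i j₁ = 1) := by
    intro i; simp [hAdef, hBdef]
  refine ⟨fun a => if M a j₂ = 1 then a else f a, ⟨?_, ?_, ?_⟩, ?_, ?_⟩
  · intro a ha
    simp only [Set.mem_setOf_eq] at ha ⊢
    by_cases h2 : M a j₂ = 1
    · simpa [h2]
    · simp only [if_neg h2]
      exact ((hmemB' _).mp (hfbij.mapsTo ((hmemA' _).mpr ⟨ha, h2⟩))).1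
  · intro a ha a' ha' heq
    simp only [Set.mem_setOf_eq] at ha ha'
    by_cases h2 : M a j₂ = 1 <;> by_cases h2' : M a' j₂ = 1
    · simpa [h2, h2'] using heq
    · exfalso
      simp only [if_pos h2, if_neg h2'] at heq
      have := ((hmemB' _).mp (hfbij.mapsTo ((hmemA' _).mpr ⟨ha', h2'⟩))).2
      rw [← heq] at this; exact this ha
    · exfalso
      simp only [if_neg h2, if_pos h2'] at heq
      have := ((hmemB' _).mp (hfbij.mapsTo ((hmemA' _).mpr ⟨ha, h2⟩))).2
      rw [heq] at this; exact this ha'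
    · simp only [if_neg h2, if_neg h2'] at heq
      exact hfbij.injOn ((hmemA' _).mpr ⟨ha, h2⟩) ((hmemA' _).mpr ⟨ha', h2'⟩) heq
  · intro b hb
    simp only [Set.mem_setOf_eq] at hb
    by_cases h1 : M b j₁ = 1
    · exact ⟨b, h1, by simp [hb]⟩
    · obtain ⟨a, ha, hfa⟩ := hfbij.surjOn ((hmemB' _).mpr ⟨hb, h1⟩)
      obtain ⟨ha1, ha2⟩ := (hmemA' _).mp ha
      exact ⟨a, ha1, by simp [ha2, hfa]⟩
  · intro i hi
    by_cases h2 : M i j₂ = 1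
    · simp [h2]
    · simp only [if_neg h2]
      exact hfle i (by rw [← Finset.mem_coe, hmemA' i]; exact ⟨hi, h2⟩)
  · intro i hi
    by_cases h2 : M i j₂ = 1
    · simp [h2, hi]
    · have hne : f i ≠ i := by
        have := ((hmemB' _).mp (hfbij.mapsTo ((hmemA' _).mpr ⟨hi, h2⟩))).2
        intro heq; rw [heq] at this; exact this hi
      simp only [if_neg h2]
      simp [hne, hi, h2]

/-- If a `k`-uniform binary matrix admits, for each pair of consecutive
columns, an assignment mapping satisfying Condition (2), then for each pair of
consecutive columns it admits an assignment mapping satisfying both Conditions (1)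
and (2). -/
theorem stmt_0 {n k : ℕ} (M : Fin n → Fin n → ℕ)
    (hbin : IsBinary M) (hunif : IsUniform k M)
    (h : ∀ j : ℕ, ∀ hj : j + 1 < n, ∃ φ : Fin n → Fin n,
      IsAssignment M ⟨j, Nat.lt_of_succ_lt hj⟩ ⟨j + 1, hj⟩ φ ∧
      Cond2 M ⟨j, Nat.lt_of_succ_lt hj⟩ φ) :
    ∀ j : ℕ, ∀ hj : j + 1 < n, ∃ ψ : Fin n → Fin n,
      IsAssignment M ⟨j, Nat.lt_of_succ_lt hj⟩ ⟨j + 1, hj⟩ ψ ∧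
      Cond2 M ⟨j, Nat.lt_of_succ_lt hj⟩ ψ ∧
      Cond1 M ⟨j, Nat.lt_of_succ_lt hj⟩ ⟨j + 1, hj⟩ ψ := by
  intro j hj
  obtain ⟨φ, hφ, hφ2⟩ := h j hj
  obtain ⟨ψ, h1, h2, h3⟩ := stmt_0'aux M hunif ⟨j, Nat.lt_of_succ_lt hj⟩ ⟨j + 1, hj⟩ φ hφ hφ2
  exact ⟨ψ, h1, h2, h3⟩
end

section
/- Let M be an n×n k-uniform binary matrix and fix j with 1 ≤ j ≤ n−1. Then there exists an assignment mapping φ_j for M satisfying Conditions (1) and (2) if and only if for every integer v, the number of indices i ∈ X_{0,1}^j with S_{i,j} ≥ v is at most the number of indices i ∈ X_{1,0}^j with S_{i,j} ≥ v (this counting condition is equivalent to the canonical word w_j being a Dyck word). -/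
open Finset

variable {α : Type*}

theorem Set.BijOn.ite_id_of_sdiff {s t : Set α} [DecidablePred (· ∈ t)] {e : α → α}
    (he : Set.BijOn e (s \ t) (t \ s)) : Set.BijOn (fun x => if x ∈ t then x else e x) s t := by
  refine ⟨fun x hx => ?_, fun x hx y hy hxy => ?_, fun y hy => ?_⟩
  · by_cases hxt : x ∈ t
    · simp [hxt]
    · simpa [hxt] using (he.mapsTo ⟨hx, hxt⟩).1
  · by_cases hxt : x ∈ t <;> by_cases hyt : y ∈ t <;>
      simp only [hxt, hyt, if_true, if_false] at hxy
    · exact hxy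
    · exact absurd (hxy ▸ hx) (he.mapsTo ⟨hy, hyt⟩).2
    · exact absurd (hxy ▸ hy) (he.mapsTo ⟨hx, hxt⟩).2
    · exact he.injOn ⟨hx, hxt⟩ ⟨hy, hyt⟩ hxy
  · by_cases hys : y ∈ s
    · exact ⟨y, hys, by simp [hy]⟩
    · obtain ⟨x, ⟨hxs, hxt⟩, rfl⟩ := he.surjOn ⟨hy, hys⟩
      exact ⟨x, hxs, by simp [hxt]⟩

theorem Set.BijOn.surjOn_sdiff_of_eqOn_inter {s t : Set α} {φ : α → α}
    (hφ : Set.BijOn φ s t) (hfix : Set.EqOn φ id (s ∩ t)) : Set.SurjOn φ (s \ t) (t \ s) := by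
  rintro y ⟨hyt, hys⟩
  obtain ⟨x, hxs, rfl⟩ := hφ.surjOn hyt
  refine ⟨x, ⟨hxs, fun hxt => hys ?_⟩, rfl⟩
  rwa [hfix ⟨hxs, hxt⟩]

variable {β : Type*} [LinearOrder β] (w : α → β)

theorem Finset.card_filter_le_card_filter_of_surjOn {s t : Finset α} {f : α → α}
    (hf : Set.SurjOn f s t) (hw : ∀ x ∈ s, w (f x) ≤ w x) (v : β) :
    #(t.filter (v ≤ w ·)) ≤ #(s.filter (v ≤ w ·)) := by
  refine card_le_card_of_surjOn f fun y hy => ?_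
  simp only [coe_filter, Set.mem_ofPred_eq] at hy
  obtain ⟨x, hx, rfl⟩ := hf hy.1
  exact ⟨x, by simpa using ⟨hx, hy.2.trans (hw x hx)⟩, rfl⟩

theorem Finset.exists_bijOn_le_of_card_filter_le [DecidableEq α] {s t : Finset α}
    (hcard : #s = #t) (hcount : ∀ v, #(t.filter (v ≤ w ·)) ≤ #(s.filter (v ≤ w ·))) :
    ∃ e : α → α, Set.BijOn e s t ∧ ∀ x ∈ s, w (e x) ≤ w x := by
  induction t using Finset.induction_on_max_value w generalizing s with
  | empty => exact ⟨id, by simp_all, by simp_all⟩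
  | insert q t hqt hmax ih =>
    obtain ⟨p, hps, hqp⟩ : ∃ p ∈ s, w q ≤ w p := by
      have := (hcount (w q)).trans_lt' (card_pos.mpr ⟨q, by simp⟩)
      simpa [Finset.Nonempty] using card_pos.mp this
    have hcount' (v : β) : #(t.filter (v ≤ w ·)) ≤ #((s.erase p).filter (v ≤ w ·)) := by
      by_cases hv : v ≤ w q
      · have := hcount v
        rw [filter_insert, if_pos hv, card_insert_of_notMem (by simp [hqt]), filter_erase,
          card_erase_of_mem (by simp [hps, hv.trans hqp])] at *
        omega
      · rw [filter_false_of_mem fun x hx hvx => hv (hvx.trans (hmax x hx))]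
        simp
    have hcard' : #(s.erase p) = #t := by
      rw [card_erase_of_mem hps, hcard, card_insert_of_notMem hqt, Nat.add_sub_cancel]
    obtain ⟨e, he, hew⟩ := ih hcard' hcount'
    have he' : Set.BijOn (Function.update e p q) ↑(s.erase p) ↑t :=
      he.congr fun x hx => (Function.update_of_ne (ne_of_mem_erase hx) _ _).symm
    refine ⟨Function.update e p q, ?_, fun x hx => ?_⟩
    · have := he'.insert (a := p) (by simpa using hqt)
      rwa [Function.update_self, ← coe_insert, ← coe_insert, insert_erase hps] at this
    · rcases eq_or_ne x p with rfl | hxp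
      · simpa using hqp
      · simpa [hxp] using hew x (mem_erase.mpr ⟨hxp, hx⟩)

theorem Finset.exists_bijOn_id_on_inter_iff [DecidableEq α] {s t : Finset α} (hcard : #s = #t) :
    (∃ φ : α → α, Set.BijOn φ s t ∧ (∀ x ∈ s, φ x = x ↔ x ∈ t) ∧
        ∀ x ∈ s, w (φ x) ≤ w x) ↔
      ∀ v, #((t \ s).filter (v ≤ w ·)) ≤ #((s \ t).filter (v ≤ w ·)) := by
  constructor
  · rintro ⟨φ, hφ, hfix, hw⟩
    have hsurj : Set.SurjOn φ ↑(s \ t) ↑(t \ s) := by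
      rw [coe_sdiff, coe_sdiff]
      exact hφ.surjOn_sdiff_of_eqOn_inter fun x ⟨hxs, hxt⟩ => (hfix x hxs).mpr hxt
    exact card_filter_le_card_filter_of_surjOn w hsurj fun x hx => hw x (mem_sdiff.mp hx).1
  · intro hcount
    obtain ⟨e, he, hew⟩ := exists_bijOn_le_of_card_filter_le w (card_sdiff_comm hcard) hcount
    rw [coe_sdiff, coe_sdiff] at he
    refine ⟨fun x => if x ∈ (t : Set α) then x else e x, he.ite_id_of_sdiff, fun x hxs => ?_,
      fun x hxs => ?_⟩
    · by_cases hxt : x ∈ t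
      · simp [hxt]
      · simp only [mem_coe, hxt, if_false, iff_false]
        exact fun hex => (he.mapsTo ⟨hxs, hxt⟩).2 (by rw [hex]; exact hxs)
    · by_cases hxt : x ∈ t
      · simp [hxt]
      · simpa [hxt] using hew x (mem_sdiff.mpr ⟨hxs, hxt⟩)

section Matrix

variable {n : ℕ} (M : Fin n → Fin n → ℕ)

def colSupport (c : Fin n) : Finset (Fin n) := univ.filter (M · c = 1)

variable {M}

theorem isAssignment_iff_bijOn_colSupport {c c' : Fin n} {φ : Fin n → Fin n} :
    IsAssignment M c c' φ ↔ Set.BijOn φ (colSupport M c) (colSupport M c') := by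
  simp [IsAssignment, colSupport]

theorem cond1_iff_colSupport {c c' : Fin n} {φ : Fin n → Fin n} :
    Cond1 M c c' φ ↔ ∀ i ∈ colSupport M c, φ i = i ↔ i ∈ colSupport M c' := by
  simp +contextual [Cond1, colSupport]

theorem cond2_iff_colSupport {c : Fin n} {φ : Fin n → Fin n} :
    Cond2 M c φ ↔ ∀ i ∈ colSupport M c, (RowSum M (φ i) c : ℤ) ≤ RowSum M i c := by
  simp [Cond2, colSupport]

theorem IsBinary.mem_colSupport_sdiff (hbin : IsBinary M) {c c' i : Fin n} :
    i ∈ colSupport M c \ colSupport M c' ↔ M i c = 1 ∧ M i c' = 0 := by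
  have := hbin i c'
  simp only [colSupport, mem_sdiff, mem_filter, mem_univ, true_and]
  omega

theorem IsUniform.card_colSupport {k : ℕ} (hunif : IsUniform k M) (c : Fin n) :
    #(colSupport M c) = k :=
  hunif.2 c

end Matrix

/-- For a `k`-uniform binary matrix and a fixed pair of consecutive
columns, an assignment mapping satisfying Conditions (1) and (2) exists if and only if
for every integer `v` the number of rows `i ∈ X₀₁` with `S_{i,j} ≥ v` is at most the
number of rows `i ∈ X₁₀` with `S_{i,j} ≥ v`. -/
theorem stmt_2 {n k : ℕ} (M : Fin n → Fin n → ℕ)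
    (hbin : IsBinary M) (hunif : IsUniform k M) (j : ℕ) (hj : j + 1 < n) :
    (∃ φ : Fin n → Fin n,
      IsAssignment M ⟨j, Nat.lt_of_succ_lt hj⟩ ⟨j + 1, hj⟩ φ ∧
      Cond1 M ⟨j, Nat.lt_of_succ_lt hj⟩ ⟨j + 1, hj⟩ φ ∧
      Cond2 M ⟨j, Nat.lt_of_succ_lt hj⟩ φ) ↔
    ∀ v : ℤ,
      (Finset.univ.filter fun i : Fin n =>
          M i ⟨j, Nat.lt_of_succ_lt hj⟩ = 0 ∧ M i ⟨j + 1, hj⟩ = 1 ∧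
          v ≤ (RowSum M i ⟨j, Nat.lt_of_succ_lt hj⟩ : ℤ)).card ≤
      (Finset.univ.filter fun i : Fin n =>
          M i ⟨j, Nat.lt_of_succ_lt hj⟩ = 1 ∧ M i ⟨j + 1, hj⟩ = 0 ∧
          v ≤ (RowSum M i ⟨j, Nat.lt_of_succ_lt hj⟩ : ℤ)).card := by
  set c : Fin n := ⟨j, Nat.lt_of_succ_lt hj⟩
  set c' : Fin n := ⟨j + 1, hj⟩
  have hcard : #(colSupport M c) = #(colSupport M c') := by
    rw [hunif.card_colSupport, hunif.card_colSupport]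
  simp only [isAssignment_iff_bijOn_colSupport, cond1_iff_colSupport, cond2_iff_colSupport,
    exists_bijOn_id_on_inter_iff (fun i => (RowSum M i c : ℤ)) hcard]
  refine forall_congr' fun v => ?_
  congr! 2 <;> ext i <;>
    simp only [mem_filter, mem_univ, true_and, hbin.mem_colSupport_sdiff] <;> tauto
end

section
/- Let M be an n×n k-uniform binary matrix and fix j with 1 ≤ j ≤ n−1. Then every assignment mapping φ_j for M satisfying Condition (1) also satisfies Condition (2) if and only if S_{i1,j} ≥ S_{i2,j} for all i1 ∈ X_{1,0}^j and all i2 ∈ X_{0,1}^j. -/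
/-- For a `k`-uniform binary matrix and a fixed pair of consecutive
columns, every assignment mapping satisfying Condition (1) also satisfies
Condition (2) if and only if `S_{i₁,j} ≥ S_{i₂,j}` for all `i₁ ∈ X₁₀` and all
`i₂ ∈ X₀₁`. -/
theorem stmt_3 {n k : ℕ} (M : Fin n → Fin n → ℕ)
    (hbin : IsBinary M) (hunif : IsUniform k M) (j : ℕ) (hj : j + 1 < n) :
    (∀ φ : Fin n → Fin n,
      IsAssignment M ⟨j, Nat.lt_of_succ_lt hj⟩ ⟨j + 1, hj⟩ φ →
      Cond1 M ⟨j, Nat.lt_of_succ_lt hj⟩ ⟨j + 1, hj⟩ φ →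
      Cond2 M ⟨j, Nat.lt_of_succ_lt hj⟩ φ) ↔
    (∀ i1 i2 : Fin n,
      (M i1 ⟨j, Nat.lt_of_succ_lt hj⟩ = 1 ∧ M i1 ⟨j + 1, hj⟩ = 0) →
      (M i2 ⟨j, Nat.lt_of_succ_lt hj⟩ = 0 ∧ M i2 ⟨j + 1, hj⟩ = 1) →
      RowSum M i2 ⟨j, Nat.lt_of_succ_lt hj⟩ ≤ RowSum M i1 ⟨j, Nat.lt_of_succ_lt hj⟩) := by
  set c : Fin n := ⟨j, Nat.lt_of_succ_lt hj⟩ with hc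
  set c' : Fin n := ⟨j + 1, hj⟩ with hc'
  constructor
  · -- forward: build a φ for each pair
    intro h i1 i2 ⟨h1j, h1j'⟩ ⟨h2j, h2j'⟩
    classical
    set A : Finset (Fin n) := Finset.univ.filter (fun i => M i c = 1 ∧ M i c' = 0) with hA
    set B : Finset (Fin n) := Finset.univ.filter (fun i => M i c = 0 ∧ M i c' = 1) with hB
    have hi1A : i1 ∈ A := by simp [hA, h1j, h1j']
    have hi2B : i2 ∈ B := by simp [hB, h2j, h2j']
    have hcard : A.card = B.card := by
      set D : Finset (Fin n) := Finset.univ.filter (fun i => M i c = 1) with hD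
      set D' : Finset (Fin n) := Finset.univ.filter (fun i => M i c' = 1) with hD'
      have hAD : A = D \ D' := by
        ext i
        simp only [hA, hD, hD', Finset.mem_filter, Finset.mem_sdiff, Finset.mem_univ,
          true_and]
        constructor
        · rintro ⟨h1, h2⟩; exact ⟨h1, by omega⟩
        · rintro ⟨h1, h2⟩; rcases hbin i c' with h3 | h3 <;> simp_all
      have hBD : B = D' \ D := by
        ext i
        simp only [hB, hD, hD', Finset.mem_filter, Finset.mem_sdiff, Finset.mem_univ,
          true_and]
        constructor
        · rintro ⟨h1, h2⟩; exact ⟨h2, by omega⟩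
        · rintro ⟨h1, h2⟩; rcases hbin i c with h3 | h3 <;> simp_all
      have e1 : (D \ D').card + (D ∩ D').card = D.card := Finset.card_sdiff_add_card_inter D D'
      have e2 : (D' \ D).card + (D' ∩ D).card = D'.card := Finset.card_sdiff_add_card_inter D' D
      have e3 : (D ∩ D').card = (D' ∩ D).card := by rw [Finset.inter_comm]
      have e4 : D.card = k := hunif.2 c
      have e5 : D'.card = k := hunif.2 c'
      rw [hAD, hBD]; omega
    let e0 : {x // x ∈ A} ≃ {x // x ∈ B} := Finset.equivOfCardEq hcard
    let e : {x // x ∈ A} ≃ {x // x ∈ B} :=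
      e0.trans (Equiv.swap (e0 ⟨i1, hi1A⟩) ⟨i2, hi2B⟩)
    let φ : Fin n → Fin n := fun i => if hi : i ∈ A then (e ⟨i, hi⟩ : Fin n) else i
    have hφA : ∀ i (hi : i ∈ A), φ i ∈ B := by
      intro i hi; simp only [φ, dif_pos hi]; exact (e ⟨i, hi⟩).2
    have hφid : ∀ i, i ∉ A → φ i = i := by
      intro i hi; simp only [φ, dif_neg hi]
    have hφ1 : φ i1 = i2 := by
      simp only [φ, dif_pos hi1A]
      have : e ⟨i1, hi1A⟩ = ⟨i2, hi2B⟩ := by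
        simp only [e, Equiv.trans_apply, Equiv.swap_apply_left]
      rw [this]
    have hnotA : ∀ i, M i c = 1 → i ∉ A → M i c' = 1 := by
      intro i hiM hiA
      rcases hbin i c' with h0 | h1
      · exact absurd (by simp [hA, hiM, h0]) hiA
      · exact h1
    have hass : IsAssignment M c c' φ := by
      refine ⟨?_, ?_, ?_⟩
      · intro i hi
        by_cases hiA : i ∈ A
        · have := hφA i hiA
          simp only [hB, Finset.mem_filter] at this
          exact this.2.2
        · rw [hφid i hiA]; exact hnotA i hi hiA
      · intro x hx y hy hxy
        by_cases hxA : x ∈ A <;> by_cases hyA : y ∈ A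
        · have : (e ⟨x, hxA⟩ : Fin n) = (e ⟨y, hyA⟩ : Fin n) := by
            simpa only [φ, dif_pos hxA, dif_pos hyA] using hxy
          have := e.injective (Subtype.ext this)
          exact Subtype.mk_eq_mk.mp this
        · exfalso
          have hb : φ x ∈ B := hφA x hxA
          rw [hxy, hφid y hyA] at hb
          simp only [hB, Finset.mem_filter] at hb
          have : M y c = 1 := hy
          omega
        · exfalso
          have hb : φ y ∈ B := hφA y hyA
          rw [← hxy, hφid x hxA] at hb
          simp only [hB, Finset.mem_filter] at hb
          have : M x c = 1 := hx
          omega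
        · rw [hφid x hxA, hφid y hyA] at hxy; exact hxy
      · intro b hb
        by_cases hbc : M b c = 1
        · have hbA : b ∉ A := by
            simp only [hA, Finset.mem_filter]
            have : M b c' = 1 := hb
            push_neg
            intro _ _; omega
          exact ⟨b, hbc, hφid b hbA⟩
        · have hb0 : M b c = 0 := (hbin b c).resolve_right hbc
          have hbB : b ∈ B := by simp [hB, hb0]; exact hb
          obtain ⟨a, ha⟩ := e.surjective ⟨b, hbB⟩
          refine ⟨(a : Fin n), ?_, ?_⟩
          · have := a.2
            simp only [hA, Finset.mem_filter] at this
            exact this.2.1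
          · simp only [φ, dif_pos a.2]
            rw [Subtype.coe_eta, ha]
    have hc1 : Cond1 M c c' φ := by
      intro i hi
      by_cases hiA : i ∈ A
      · constructor
        · intro hfix
          exfalso
          have hb : φ i ∈ B := hφA i hiA
          rw [hfix] at hb
          simp only [hB, Finset.mem_filter] at hb
          omega
        · rintro ⟨_, h1⟩
          exfalso
          simp only [hA, Finset.mem_filter] at hiA
          omega
      · simp [hφid i hiA, hi, hnotA i hi hiA]
    have h2 := h φ hass hc1 i1 h1j
    rwa [hφ1] at h2
  · -- backward
    intro hS φ hass hc1 i hi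
    by_cases h' : M i c' = 1
    · rw [(hc1 i hi).2 ⟨hi, h'⟩]
    · have h0 : M i c' = 0 := (hbin i c').resolve_right h'
      have hφmem : M (φ i) c' = 1 := hass.1 hi
      have hφj : M (φ i) c = 0 := by
        rcases hbin (φ i) c with hz | ho
        · exact hz
        · exfalso
          have hfix : φ (φ i) = φ i := (hc1 (φ i) ho).2 ⟨ho, hφmem⟩
          have : φ i = i := hass.2.1 ho hi hfix
          rw [this] at hφmem
          omega
      exact hS i (φ i) ⟨hi, h0⟩ ⟨hφj, hφmem⟩
end

section
/- Let M be an n×n k-uniform binary matrix and let 1 ≤ j ≤ n−1. If j ∈ {1, 2, n−2, n−1} or k ∈ {1, 2, n−2, n−1}, then S_{i1,j} ≥ S_{i2,j} for all i1 ∈ X_{1,0}^j and all i2 ∈ X_{0,1}^j; in particular there exists an assignment mapping φ_j for M satisfying Conditions (1) and (2). -/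
lemma rowSum_eq_card {n : ℕ} {M : Fin n → Fin n → ℕ} (hbin : IsBinary M) (i j : Fin n) :
    RowSum M i j = ((Finset.Iic j).filter (fun l => M i l = 1)).card := by
  unfold RowSum
  rw [Finset.card_filter]
  refine Finset.sum_congr rfl fun l _ => ?_
  rcases hbin i l with h | h <;> simp [h]

-- key bounds
lemma bound1 {n : ℕ} {M : Fin n → Fin n → ℕ} (hbin : IsBinary M) {i j : Fin n}
    (h : M i j = 1) : 1 ≤ RowSum M i j := by
  rw [rowSum_eq_card hbin]
  refine Finset.card_pos.2 ⟨j, ?_⟩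
  simp [h]

lemma bound2 {n : ℕ} {M : Fin n → Fin n → ℕ} (hbin : IsBinary M) {i j : Fin n}
    (h : M i j = 0) : RowSum M i j ≤ j.val := by
  rw [rowSum_eq_card hbin]
  calc ((Finset.Iic j).filter (fun l => M i l = 1)).card
      ≤ (Finset.Iio j).card := by
        apply Finset.card_le_card
        intro l hl
        simp only [Finset.mem_filter, Finset.mem_Iic] at hl
        rw [Finset.mem_Iio]
        rcases lt_or_eq_of_le hl.1 with h' | h'
        · exact h'
        · exfalso; rw [h'] at hl; omega
    _ = j.val := Fin.card_Iio j

lemma bound3 {n k : ℕ} {M : Fin n → Fin n → ℕ} (hbin : IsBinary M)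
    (hunif : IsUniform k M) {i j0 j1 : Fin n} (hlt : j0 < j1) (h : M i j1 = 1) :
    RowSum M i j0 + 1 ≤ k := by
  rw [rowSum_eq_card hbin]
  have hnm : j1 ∉ (Finset.Iic j0).filter (fun l => M i l = 1) := by
    simp only [Finset.mem_filter, Finset.mem_Iic]
    exact fun hc => absurd hc.1 (not_le.2 hlt)
  rw [← Finset.card_insert_of_notMem hnm, ← hunif.1 i]
  apply Finset.card_le_card
  intro l hl
  simp only [Finset.mem_insert, Finset.mem_filter, Finset.mem_Iic] at hl ⊢
  refine ⟨Finset.mem_univ l, ?_⟩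
  rcases hl with rfl | hl
  · exact h
  · exact hl.2

lemma bound4 {n k : ℕ} {M : Fin n → Fin n → ℕ} (hbin : IsBinary M)
    (hunif : IsUniform k M) {i j0 j1 : Fin n} (hlt : j0.val + 1 = j1.val)
    (h : M i j1 = 0) : k ≤ RowSum M i j0 + (n - 1 - j1.val) := by
  rw [rowSum_eq_card hbin, ← Fin.card_Ioi j1, ← hunif.1 i]
  apply le_trans (Finset.card_le_card ?_) (Finset.card_union_le _ _)
  intro l hl
  simp only [Finset.mem_filter, Finset.mem_univ, true_and] at hl
  simp only [Finset.mem_union, Finset.mem_filter, Finset.mem_Iic, Finset.mem_Ioi]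
  rcases le_or_gt l j0 with h' | h'
  · exact Or.inl ⟨h', hl⟩
  · right
    have hne : l ≠ j1 := fun hc => by rw [hc] at hl; omega
    rw [Fin.lt_iff_val_lt_val] at h' ⊢
    omega

/-- For a `k`-uniform binary matrix, if the (1-indexed) column index
`j + 1` is one of `1, 2, n−2, n−1`, or if `k` is one of `1, 2, n−2, n−1`, then
`S_{i₁,j} ≥ S_{i₂,j}` for all `i₁ ∈ X₁₀` and `i₂ ∈ X₀₁`; in particular there exists
an assignment mapping satisfying Conditions (1) and (2). -/
theorem stmt_4 {n k : ℕ} (M : Fin n → Fin n → ℕ)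
    (hbin : IsBinary M) (hunif : IsUniform k M) (j : ℕ) (hj : j + 1 < n)
    (hcase : (j + 1 = 1 ∨ j + 1 = 2 ∨ j + 1 = n - 2 ∨ j + 1 = n - 1) ∨
             (k = 1 ∨ k = 2 ∨ k = n - 2 ∨ k = n - 1)) :
    (∀ i1 i2 : Fin n,
      (M i1 ⟨j, Nat.lt_of_succ_lt hj⟩ = 1 ∧ M i1 ⟨j + 1, hj⟩ = 0) →
      (M i2 ⟨j, Nat.lt_of_succ_lt hj⟩ = 0 ∧ M i2 ⟨j + 1, hj⟩ = 1) →
      RowSum M i2 ⟨j, Nat.lt_of_succ_lt hj⟩ ≤ RowSum M i1 ⟨j, Nat.lt_of_succ_lt hj⟩) ∧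
    (∃ φ : Fin n → Fin n,
      IsAssignment M ⟨j, Nat.lt_of_succ_lt hj⟩ ⟨j + 1, hj⟩ φ ∧
      Cond1 M ⟨j, Nat.lt_of_succ_lt hj⟩ ⟨j + 1, hj⟩ φ ∧
      Cond2 M ⟨j, Nat.lt_of_succ_lt hj⟩ φ) := by
  classical
  set j0 : Fin n := ⟨j, Nat.lt_of_succ_lt hj⟩ with hj0
  set j1 : Fin n := ⟨j + 1, hj⟩ with hj1
  have hlt : j0 < j1 := by simp [hj0, hj1, Fin.lt_def]
  have hval : j0.val + 1 = j1.val := rfl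
  have key : ∀ i1 i2 : Fin n,
      (M i1 j0 = 1 ∧ M i1 j1 = 0) → (M i2 j0 = 0 ∧ M i2 j1 = 1) →
      RowSum M i2 j0 ≤ RowSum M i1 j0 := by
    intro i1 i2 ⟨h1a, h1b⟩ ⟨h2a, h2b⟩
    have B1 := bound1 hbin h1a
    have B4 := bound4 hbin hunif hval h1b
    have B2 := bound2 hbin h2a
    have B3 := bound3 hbin hunif hlt h2b
    have hv0 : j0.val = j := rfl
    have hv1 : j1.val = j + 1 := rfl
    rw [hv0] at B2
    rw [hv1] at B4
    omega
  refine ⟨key, ?_⟩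
  -- construct the assignment
  set A10 : Finset (Fin n) :=
    (Finset.univ.filter fun i => M i j0 = 1).filter (fun i => ¬ M i j1 = 1) with hA10
  set A01 : Finset (Fin n) :=
    (Finset.univ.filter fun i => M i j1 = 1).filter (fun i => ¬ M i j0 = 1) with hA01
  have hcard : A10.card = A01.card := by
    have h1 := Finset.card_filter_add_card_filter_not
      (s := Finset.univ.filter fun i => M i j0 = 1) (p := fun i => M i j1 = 1)
    have h2 := Finset.card_filter_add_card_filter_not
      (s := Finset.univ.filter fun i => M i j1 = 1) (p := fun i => M i j0 = 1)
    rw [hunif.2 j0] at h1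
    rw [hunif.2 j1] at h2
    have heq : ((Finset.univ.filter fun i => M i j0 = 1).filter fun i => M i j1 = 1)
        = ((Finset.univ.filter fun i => M i j1 = 1).filter fun i => M i j0 = 1) := by
      ext i; simp [and_comm]
    rw [heq] at h1
    simp only [← hA10, ← hA01] at h1 h2
    omega
  let e : (A10 : Finset (Fin n)) ≃ (A01 : Finset (Fin n)) := Finset.equivOfCardEq hcard
  set φ : Fin n → Fin n := fun i => if h : i ∈ A10 then (e ⟨i, h⟩ : Fin n) else i with hφ
  have mem10 : ∀ i, i ∈ A10 ↔ (M i j0 = 1 ∧ ¬ M i j1 = 1) := by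
    intro i; simp [hA10]
  have mem01 : ∀ i, i ∈ A01 ↔ (M i j1 = 1 ∧ ¬ M i j0 = 1) := by
    intro i; simp [hA01]
  have hfix : ∀ i, M i j1 = 1 → φ i = i := by
    intro i h
    have : i ∉ A10 := fun hc => ((mem10 i).1 hc).2 h
    simp [hφ, this]
  have hmove : ∀ i (h : i ∈ A10), φ i = (e ⟨i, h⟩ : Fin n) := by
    intro i h; simp [hφ, h]
  have hmove' : ∀ i (h : i ∈ A10), φ i ∈ A01 := by
    intro i h; rw [hmove i h]; exact (e ⟨i, h⟩).2
  refine ⟨φ, ⟨?_, ?_, ?_⟩, ?_, ?_⟩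
  · -- MapsTo
    intro i hi
    simp only [Set.mem_setOf_eq] at hi ⊢
    by_cases h1 : M i j1 = 1
    · rw [hfix i h1]; exact h1
    · have hm : i ∈ A10 := (mem10 i).2 ⟨hi, h1⟩
      exact ((mem01 _).1 (hmove' i hm)).1
  · -- InjOn
    intro a ha b hb hab
    simp only [Set.mem_setOf_eq] at ha hb
    by_cases h1 : M a j1 = 1 <;> by_cases h2 : M b j1 = 1
    · rw [hfix a h1, hfix b h2] at hab; exact hab
    · exfalso
      have hmb : b ∈ A10 := (mem10 b).2 ⟨hb, h2⟩
      rw [hfix a h1, hmove b hmb] at hab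
      exact ((mem01 _).1 (e ⟨b, hmb⟩).2).2 (hab ▸ ha)
    · exfalso
      have hma : a ∈ A10 := (mem10 a).2 ⟨ha, h1⟩
      rw [hfix b h2, hmove a hma] at hab
      exact ((mem01 _).1 (e ⟨a, hma⟩).2).2 (hab ▸ hb)
    · have hma : a ∈ A10 := (mem10 a).2 ⟨ha, h1⟩
      have hmb : b ∈ A10 := (mem10 b).2 ⟨hb, h2⟩
      rw [hmove a hma, hmove b hmb] at hab
      have : e ⟨a, hma⟩ = e ⟨b, hmb⟩ := Subtype.ext hab
      have := e.injective this
      exact congrArg Subtype.val this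
  · -- SurjOn
    intro b hb
    simp only [Set.mem_setOf_eq] at hb
    by_cases h0 : M b j0 = 1
    · exact ⟨b, h0, hfix b hb⟩
    · have hmb : b ∈ A01 := (mem01 b).2 ⟨hb, h0⟩
      set a := e.symm ⟨b, hmb⟩ with ha
      refine ⟨a.1, ?_, ?_⟩
      · exact ((mem10 _).1 a.2).1
      · have : φ a.1 = (e ⟨a.1, a.2⟩ : Fin n) := hmove a.1 a.2
        rw [this]
        have : (⟨a.1, a.2⟩ : {x // x ∈ A10}) = a := rfl
        rw [this, ha, e.apply_symm_apply]
  · -- Cond1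
    intro i hi
    by_cases h1 : M i j1 = 1
    · simp [hfix i h1, hi, h1]
    · have hma : i ∈ A10 := (mem10 i).2 ⟨hi, h1⟩
      have hne : φ i ≠ i := by
        intro hc
        have := ((mem01 _).1 (hmove' i hma)).2
        rw [hc] at this
        exact this hi
      simp [hne, h1]
  · -- Cond2
    intro i hi
    by_cases h1 : M i j1 = 1
    · rw [hfix i h1]
    · have hma : i ∈ A10 := (mem10 i).2 ⟨hi, h1⟩
      have hm := (mem01 _).1 (hmove' i hma)
      have h1' : M i j1 = 0 := (hbin i j1).resolve_right h1
      have h2' : M (φ i) j0 = 0 := (hbin (φ i) j0).resolve_right hm.2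
      exact key i (φ i) ⟨hi, h1'⟩ ⟨h2', hm.1⟩
end

section
/- If an n×n binary matrix M is k-uniform but not optimal, then 3 ≤ k ≤ n−3 (in particular n ≥ 6). -/
lemma rowsum_eq_card {n : ℕ} (M : Fin n → Fin n → ℕ) (hbin : IsBinary M) (i j : Fin n) :
    RowSum M i j = ((Finset.Iic j).filter (fun l => M i l = 1)).card := by
  unfold RowSum
  rw [Finset.card_filter]
  refine Finset.sum_congr rfl fun l _ => ?_
  rcases hbin i l with h | h <;> simp [h]

lemma zeros_card {n k : ℕ} (M : Fin n → Fin n → ℕ) (hbin : IsBinary M)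
    (hunif : IsUniform k M) (i : Fin n) :
    (Finset.univ.filter (fun l => M i l = 0)).card = n - k := by
  have h1 : (Finset.univ.filter (fun l => M i l = 0)) =
      Finset.univ \ (Finset.univ.filter (fun l => M i l = 1)) := by
    rw [← Finset.filter_not]
    refine Finset.filter_congr fun l _ => ?_
    rcases hbin i l with h | h <;> simp [h]
  rw [h1, Finset.card_sdiff_of_subset (Finset.filter_subset _ _), hunif.1 i, Finset.card_univ,
    Fintype.card_fin]

/-- The key inequality: if `k ≤ 2` or `n ≤ k + 2`, and row `i` has `1, 0` in columns
`j, j+1` while row `d` has `0, 1`, then `S_{d,j} ≤ S_{i,j}`. -/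
lemma key_ineq {n k : ℕ} (M : Fin n → Fin n → ℕ) (hbin : IsBinary M)
    (hunif : IsUniform k M) (hk : k ≤ 2 ∨ n ≤ k + 2)
    (j j' : Fin n) (hjj : (j : ℕ) + 1 = (j' : ℕ))
    (i d : Fin n) (hi1 : M i j = 1) (hi0 : M i j' = 0)
    (hd0 : M d j = 0) (hd1 : M d j' = 1) :
    RowSum M d j ≤ RowSum M i j := by
  have hjlt : j < j' := by
    rw [Fin.lt_def]; omega
  have hj'notmem : j' ∉ Finset.Iic j := by
    simp only [Finset.mem_Iic, not_le]; exact hjlt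
  rcases hk with hk | hk
  · -- small k : S_d ≤ k - 1 ≤ 1 ≤ S_i
    have hSi : 1 ≤ RowSum M i j := by
      rw [rowsum_eq_card M hbin]
      refine Finset.card_pos.mpr ⟨j, ?_⟩
      simp [Finset.mem_Iic, hi1]
    have hSd : RowSum M d j ≤ k - 1 := by
      rw [rowsum_eq_card M hbin]
      have hsub : (Finset.Iic j).filter (fun l => M d l = 1) ⊆
          (Finset.univ.filter (fun l => M d l = 1)) \ {j'} := by
        intro l hl
        simp only [Finset.mem_filter, Finset.mem_Iic] at hl
        simp only [Finset.mem_sdiff, Finset.mem_filter, Finset.mem_univ, true_and,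
          Finset.mem_singleton]
        exact ⟨hl.2, fun h => hj'notmem (h ▸ Finset.mem_Iic.mpr hl.1)⟩
      calc ((Finset.Iic j).filter (fun l => M d l = 1)).card
          ≤ ((Finset.univ.filter (fun l => M d l = 1)) \ {j'}).card :=
            Finset.card_le_card hsub
        _ = k - 1 := by
            rw [Finset.card_sdiff_of_subset (by simp [hd1]), hunif.1 d, Finset.card_singleton]
    have hk1 : k - 1 ≤ 1 := by omega
    omega
  · -- large k : S_d ≤ j, S_i ≥ j
    have hcard_Iic : (Finset.Iic j).card = (j : ℕ) + 1 := Fin.card_Iic j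
    -- S_d ≤ j : row d has a zero at column j
    have hSd : RowSum M d j ≤ (j : ℕ) := by
      rw [rowsum_eq_card M hbin]
      have hsub : (Finset.Iic j).filter (fun l => M d l = 1) ⊆ Finset.Iic j \ {j} := by
        intro l hl
        simp only [Finset.mem_filter] at hl
        simp only [Finset.mem_sdiff, Finset.mem_singleton]
        exact ⟨hl.1, fun h => by rw [h] at hl; omega⟩
      calc ((Finset.Iic j).filter (fun l => M d l = 1)).card
          ≤ (Finset.Iic j \ {j}).card := Finset.card_le_card hsub
        _ = (j : ℕ) := by
            rw [Finset.card_sdiff_of_subset (by simp), hcard_Iic, Finset.card_singleton]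
            omega
    -- S_i ≥ j : zeros of row i in Iic j are ≤ n - k - 1 ≤ 1
    have hSi : (j : ℕ) ≤ RowSum M i j := by
      rw [rowsum_eq_card M hbin]
      have hzsub : (Finset.Iic j).filter (fun l => M i l = 0) ⊆
          (Finset.univ.filter (fun l => M i l = 0)) \ {j'} := by
        intro l hl
        simp only [Finset.mem_filter, Finset.mem_Iic] at hl
        simp only [Finset.mem_sdiff, Finset.mem_filter, Finset.mem_univ, true_and,
          Finset.mem_singleton]
        exact ⟨hl.2, fun h => hj'notmem (h ▸ Finset.mem_Iic.mpr hl.1)⟩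
      have hz : ((Finset.Iic j).filter (fun l => M i l = 0)).card ≤ n - k - 1 := by
        calc ((Finset.Iic j).filter (fun l => M i l = 0)).card
            ≤ ((Finset.univ.filter (fun l => M i l = 0)) \ {j'}).card :=
              Finset.card_le_card hzsub
          _ = n - k - 1 := by
              rw [Finset.card_sdiff_of_subset (by simp [hi0]), zeros_card M hbin hunif,
                Finset.card_singleton]
      have h01 : (Finset.Iic j).filter (fun l => M i l = 0) =
          (Finset.Iic j).filter (fun l => ¬ M i l = 1) :=
        Finset.filter_congr fun l _ => by rcases hbin i l with h | h <;> simp [h]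
      have hsplit : ((Finset.Iic j).filter (fun l => M i l = 1)).card +
          ((Finset.Iic j).filter (fun l => M i l = 0)).card = (j : ℕ) + 1 := by
        rw [h01, Finset.card_filter_add_card_filter_not, hcard_Iic]
      have hkn : k ≤ n := by
        rw [← hunif.1 i]
        simpa using Finset.card_le_univ (Finset.univ.filter fun l => M i l = 1)
      omega
    omega

lemma optimal_of_easy {n k : ℕ} (M : Fin n → Fin n → ℕ)
    (hbin : IsBinary M) (hunif : IsUniform k M)
    (hk : k ≤ 2 ∨ n ≤ k + 2) : Optimal M := by
  refine ⟨⟨k, hunif⟩, ?_⟩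
  intro j hj
  set jc : Fin n := ⟨j, Nat.lt_of_succ_lt hj⟩ with hjc
  set jc' : Fin n := ⟨j + 1, hj⟩ with hjc'
  classical
  set A : Finset (Fin n) := Finset.univ.filter (fun i => M i jc = 1) with hA
  set B : Finset (Fin n) := Finset.univ.filter (fun i => M i jc' = 1) with hB
  have hcard : (A \ B).card = (B \ A).card :=
    Finset.card_sdiff_comm (by rw [hA, hB, hunif.2 jc, hunif.2 jc'])
  set e := Finset.equivOfCardEq hcard with he
  set φ : Fin n → Fin n := fun i => if h : i ∈ A \ B then (e ⟨i, h⟩ : Fin n) else i with hφ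
  have hmemA : ∀ x : Fin n, x ∈ A ↔ M x jc = 1 := by intro x; simp [hA]
  have hmemB : ∀ x : Fin n, x ∈ B ↔ M x jc' = 1 := by intro x; simp [hB]
  refine ⟨φ, ⟨?_, ?_, ?_⟩, ?_⟩
  · -- MapsTo
    intro x hx
    have hxA : x ∈ A := (hmemA x).mpr hx
    by_cases h : x ∈ A \ B
    · have := (e ⟨x, h⟩).2
      rw [Finset.mem_sdiff] at this
      show M (φ x) jc' = 1
      rw [hφ]; simp only [dif_pos h]
      exact (hmemB _).mp this.1
    · have hxB : x ∈ B := by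
        by_contra hxB
        exact h (Finset.mem_sdiff.mpr ⟨hxA, hxB⟩)
      show M (φ x) jc' = 1
      rw [hφ]; simp only [dif_neg h]
      exact (hmemB _).mp hxB
  · -- InjOn
    intro x hx y hy hxy
    have hxA : x ∈ A := (hmemA x).mpr hx
    have hyA : y ∈ A := (hmemA y).mpr hy
    by_cases h1 : x ∈ A \ B <;> by_cases h2 : y ∈ A \ B
    · rw [hφ] at hxy; simp only [dif_pos h1, dif_pos h2] at hxy
      have := e.injective (Subtype.coe_injective hxy)
      exact congrArg Subtype.val this
    · rw [hφ] at hxy; simp only [dif_pos h1, dif_neg h2] at hxy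
      exfalso
      have := (e ⟨x, h1⟩).2
      rw [Finset.mem_sdiff] at this
      rw [hxy] at this
      exact this.2 hyA
    · rw [hφ] at hxy; simp only [dif_neg h1, dif_pos h2] at hxy
      exfalso
      have := (e ⟨y, h2⟩).2
      rw [Finset.mem_sdiff] at this
      rw [← hxy] at this
      exact this.2 hxA
    · simp only [hφ, dif_neg h1, dif_neg h2] at hxy
      exact hxy
  · -- SurjOn
    intro b hb
    have hbB : b ∈ B := (hmemB b).mpr hb
    by_cases hba : b ∈ A
    · refine ⟨b, (hmemA b).mp hba, ?_⟩
      have h : b ∉ A \ B := fun h => (Finset.mem_sdiff.mp h).2 hbB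
      rw [hφ]; simp only [dif_neg h]
    · have hbBA : b ∈ B \ A := Finset.mem_sdiff.mpr ⟨hbB, hba⟩
      set a := e.symm ⟨b, hbBA⟩ with ha
      have haAB : (a : Fin n) ∈ A \ B := a.2
      refine ⟨a, (hmemA a).mp (Finset.mem_sdiff.mp haAB).1, ?_⟩
      rw [hφ]; simp only [dif_pos haAB]
      have : (⟨(a : Fin n), haAB⟩ : {x // x ∈ A \ B}) = a := Subtype.ext rfl
      rw [this, ha, Equiv.apply_symm_apply]
  · -- Cond2
    intro i hi
    by_cases h : i ∈ A \ B
    · rw [hφ]; simp only [dif_pos h]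
      have hd := (e ⟨i, h⟩).2
      rw [Finset.mem_sdiff] at hd
      have hiAB := Finset.mem_sdiff.mp h
      have hd1 : M (e ⟨i, h⟩ : Fin n) jc' = 1 := (hmemB _).mp hd.1
      have hd0 : M (e ⟨i, h⟩ : Fin n) jc = 0 := by
        rcases hbin (e ⟨i, h⟩ : Fin n) jc with h' | h'
        · exact h'
        · exact absurd ((hmemA _).mpr h') hd.2
      have hi0 : M i jc' = 0 := by
        rcases hbin i jc' with h' | h'
        · exact h'
        · exact absurd ((hmemB _).mpr h') hiAB.2
      exact key_ineq M hbin hunif hk jc jc' rfl i _ hi hi0 hd0 hd1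
    · rw [hφ]; simp only [dif_neg h]
      exact le_rfl

/-- if an `n × n` binary matrix is `k`-uniform but not optimal, then
`3 ≤ k ≤ n − 3`; in particular `n ≥ 6`. -/
theorem stmt_6 {n k : ℕ} (M : Fin n → Fin n → ℕ)
    (hbin : IsBinary M) (hunif : IsUniform k M) (hnotopt : ¬ Optimal M) :
    3 ≤ k ∧ k ≤ n - 3 ∧ 6 ≤ n := by
  have h : ¬ (k ≤ 2 ∨ n ≤ k + 2) := fun h => hnotopt (optimal_of_easy M hbin hunif h)
  push_neg at h
  omega
end

section
/- Let M be an optimal n×n k-uniform binary matrix with n ≥ 2. Then the matrix obtained from M by exchanging columns C_1 and C_2 is optimal, and the matrix obtained from M by exchanging columns C_{n−1} and C_n is optimal. -/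
/-!
Columns are indexed from `0`. For a `k`-uniform binary matrix, Condition (2) costs nothing at
the first two and the last two column pairs. A valid assignment mapping from column `j` to
column `j'` exists as soon as `S_{x,j} ≤ S_{i,j}` whenever row `i` has its `1` only in column `j`
and row `x` only in column `j'`: fix the rows with a `1` in both columns and match the rest
arbitrarily. For `j ≤ 1` this holds because `S_{i,j} ≥ 1` while `S_{x,j} ≤ j`. For `j ≥ n - 3`
write `S_{x,j} = k - T_{x,j}` with `T` the sum over the at most two columns after `j`: then
`T_{x,j} ≥ 1` while `T_{i,j} ≤ 1`. Swapping columns `0, 1` or `n - 2, n - 1` changes neither the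
other column pairs nor their partial row sums, so there the assignment mappings of `M` still work.
-/

open Finset

theorem Finset.exists_bijOn_le_of_card_eq {α β : Type*} [DecidableEq α] [Preorder β]
    {s t : Finset α} (f : α → β) (hst : #s = #t) (hf : ∀ a ∈ s \ t, ∀ b ∈ t \ s, f b ≤ f a) :
    ∃ φ : α → α, Set.BijOn φ s t ∧ ∀ a ∈ s, f (φ a) ≤ f a := by
  rcases isEmpty_or_nonempty α with hα | hα
  · exact ⟨id, Subsingleton.elim s t ▸ Set.bijOn_id _, fun a => isEmptyElim a⟩
  obtain ⟨g, hg⟩ := (s \ t).finite_toSet.exists_bijOn_of_encard_eq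
    (t := ((t \ s : Finset α) : Set α))
    (by simp only [Set.encard_coe_eq_coe_finsetCard, card_sdiff_comm hst])
  have hmaps : ∀ a ∈ s, a ∉ t → g a ∈ t ∧ g a ∉ s := fun a ha hat =>
    mem_sdiff.1 (hg.mapsTo (mem_sdiff.2 ⟨ha, hat⟩))
  refine ⟨fun a => if a ∈ t then a else g a, ⟨fun a ha => ?_, fun a ha b hb hab => ?_, ?_⟩,
    fun a ha => ?_⟩
  · by_cases hat : a ∈ t
    · simp [hat]
    · simpa [hat] using (hmaps a ha hat).1
  · by_cases hat : a ∈ t <;> by_cases hbt : b ∈ t <;>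
      simp only [hat, hbt, if_true, if_false] at hab
    · exact hab
    · exact absurd (hab ▸ ha) (hmaps b hb hbt).2
    · exact absurd (hab ▸ hb) (hmaps a ha hat).2
    · exact hg.injOn (by simp_all) (by simp_all) hab
  · intro b hb
    by_cases hbs : b ∈ s
    · exact ⟨b, hbs, by simp [mem_coe.1 hb]⟩
    · obtain ⟨a, ha, rfl⟩ := hg.surjOn (mem_sdiff.2 ⟨mem_coe.1 hb, hbs⟩)
      exact ⟨a, (mem_sdiff.1 ha).1, by simp [(mem_sdiff.1 ha).2]⟩
  · by_cases hat : a ∈ t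
    · simp [hat]
    · simpa [hat] using hf a (mem_sdiff.2 ⟨ha, hat⟩) _ (mem_sdiff.2 (hmaps a ha hat))

section

variable {n : ℕ}

def HasAssignment (M : Fin n → Fin n → ℕ) (j j' : Fin n) : Prop :=
  ∃ φ, IsAssignment M j j' φ ∧ Cond2 M j φ

lemma hasAssignment_of_rowSum_le {M : Fin n → Fin n → ℕ} {j j' : Fin n}
    (hcard : #{i | M i j = 1} = #{i | M i j' = 1})
    (hle : ∀ i x, M i j = 1 → M i j' ≠ 1 → M x j' = 1 → M x j ≠ 1 →
      RowSum M x j ≤ RowSum M i j) :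
    HasAssignment M j j' := by
  obtain ⟨φ, hφ, hφle⟩ := exists_bijOn_le_of_card_eq (RowSum M · j) hcard fun i hi x hx => by
    simp only [mem_sdiff, mem_filter_univ] at hi hx
    exact hle i x hi.1 hi.2 hx.1 hx.2
  exact ⟨φ, by simpa [IsAssignment] using hφ, fun i hi => hφle i (by simpa using hi)⟩

lemma HasAssignment.congr {M N : Fin n → Fin n → ℕ} {j j' : Fin n} (h : HasAssignment M j j')
    (hj : ∀ i, N i j = M i j) (hj' : ∀ i, N i j' = M i j')
    (hS : ∀ i, RowSum N i j = RowSum M i j) : HasAssignment N j j' := by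
  simpa only [HasAssignment, IsAssignment, Cond2, hj, hj', hS] using h

lemma IsBinary.le_one {M : Fin n → Fin n → ℕ} (hM : IsBinary M) (i j : Fin n) : M i j ≤ 1 := by
  rcases hM i j with h | h <;> omega

lemma IsBinary.sum_add_one_le_card {M : Fin n → Fin n → ℕ} (hM : IsBinary M)
    {s : Finset (Fin n)} {x c : Fin n} (hc : c ∈ s) (hxc : M x c ≠ 1) :
    ∑ l ∈ s, M x l + 1 ≤ #s := by
  have h0 : M x c = 0 := (hM x c).resolve_right hxc
  have hle : ∑ l ∈ s.erase c, M x l ≤ #(s.erase c) := by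
    simpa using sum_le_card_nsmul (s.erase c) (M x) 1 fun l _ => hM.le_one x l
  rw [← add_sum_erase s _ hc, h0, zero_add, ← card_erase_add_one hc]
  omega

lemma one_le_sum_of_eq_one {M : Fin n → Fin n → ℕ} {s : Finset (Fin n)} {x c : Fin n}
    (hc : c ∈ s) (hxc : M x c = 1) : 1 ≤ ∑ l ∈ s, M x l :=
  hxc ▸ single_le_sum (fun _ _ => Nat.zero_le _) hc

lemma rowSum_add_sum_Ioi (M : Fin n → Fin n → ℕ) (x j : Fin n) :
    RowSum M x j + ∑ l ∈ Ioi j, M x l = ∑ l, M x l := by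
  rw [RowSum, ← sum_union (disjoint_left.2 fun l h₁ h₂ => ?_)]
  · congr 1
    ext l
    simpa using le_or_gt l j
  · simp only [mem_Iic, mem_Ioi] at h₁ h₂
    exact absurd h₁ (not_le.2 h₂)

namespace IsUniform

variable {M : Fin n → Fin n → ℕ} {k : ℕ}

lemma card_col_eq (hM : IsUniform k M) (j j' : Fin n) :
    #{i | M i j = 1} = #{i | M i j' = 1} :=
  (hM.2 j).trans (hM.2 j').symm

lemma sum_row_eq (hM : IsUniform k M) (hbin : IsBinary M) (x : Fin n) : ∑ l, M x l = k := by
  rw [← hM.1 x, card_filter]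
  exact sum_congr rfl fun l _ => by rcases hbin x l with h | h <;> simp [h]

lemma hasAssignment_of_val_le_one (hM : IsUniform k M) (hbin : IsBinary M) {j : Fin n}
    (hj : (j : ℕ) ≤ 1) (j' : Fin n) : HasAssignment M j j' := by
  refine hasAssignment_of_rowSum_le (hM.card_col_eq j j') fun i x hi _ _ hx => ?_
  have hi_pos := one_le_sum_of_eq_one (mem_Iic.2 le_rfl) hi
  have hx_le := hbin.sum_add_one_le_card (mem_Iic.2 le_rfl) hx
  rw [Fin.card_Iic] at hx_le
  unfold RowSum
  omega

lemma hasAssignment_of_le_val_add_three (hM : IsUniform k M) (hbin : IsBinary M) {j j' : Fin n}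
    (hjj' : j < j') (hj : n ≤ j + 3) : HasAssignment M j j' := by
  refine hasAssignment_of_rowSum_le (hM.card_col_eq j j') fun i x _ hi hx _ => ?_
  have hx_pos := one_le_sum_of_eq_one (mem_Ioi.2 hjj') hx
  have hi_le := hbin.sum_add_one_le_card (mem_Ioi.2 hjj') hi
  rw [Fin.card_Ioi] at hi_le
  have hx_tot := rowSum_add_sum_Ioi M x j
  have hi_tot := rowSum_add_sum_Ioi M i j
  rw [hM.sum_row_eq hbin] at hx_tot hi_tot
  omega

lemma comp_right (hM : IsUniform k M) (σ : Equiv.Perm (Fin n)) :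
    IsUniform k fun i j => M i (σ j) :=
  ⟨fun i => (card_equiv σ (by simp)).trans (hM.1 i), fun j => hM.2 (σ j)⟩

end IsUniform

lemma IsBinary.comp_right {M : Fin n → Fin n → ℕ} (hM : IsBinary M) (σ : Equiv.Perm (Fin n)) :
    IsBinary fun i j => M i (σ j) :=
  fun i j => hM i (σ j)

lemma rowSum_comp_swap (M : Fin n → Fin n → ℕ) {a b j : Fin n} (h : a ≤ j ↔ b ≤ j) (x : Fin n) :
    RowSum (fun i l => M i (Equiv.swap a b l)) x j = RowSum M x j :=
  sum_equiv (Equiv.swap a b) (fun l => by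
    simp only [mem_Iic, Equiv.swap_apply_def]
    split_ifs <;> subst_vars <;> tauto) (fun _ _ => rfl)

theorem Optimal.comp_swap {M : Fin n → Fin n → ℕ} (hopt : Optimal M) (hbin : IsBinary M)
    {a b : Fin n} (hab : (a : ℕ) < 2 ∧ (b : ℕ) < 2 ∨ n ≤ a + 2 ∧ n ≤ b + 2) :
    Optimal fun i j => M i (Equiv.swap a b j) := by
  obtain ⟨⟨k, hunif⟩, hM⟩ := hopt
  have hunif' := hunif.comp_right (Equiv.swap a b)
  have hbin' := hbin.comp_right (Equiv.swap a b)
  refine ⟨⟨k, hunif'⟩, fun j hj => ?_⟩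
  by_cases hhead : j ≤ 1
  · exact hunif'.hasAssignment_of_val_le_one hbin' hhead _
  by_cases htail : n ≤ j + 3
  · exact hunif'.hasAssignment_of_le_val_add_three hbin' (Fin.mk_lt_mk.2 j.lt_succ_self) htail
  have hfix : ∀ l : Fin n, j ≤ l → (l : ℕ) ≤ j + 1 → Equiv.swap a b l = l := fun l h₁ h₂ =>
    Equiv.swap_apply_of_ne_of_ne (by rw [Ne, Fin.ext_iff]; omega) (by rw [Ne, Fin.ext_iff]; omega)
  refine HasAssignment.congr (hM j hj) (fun i => ?_) (fun i => ?_) (rowSum_comp_swap M ?_)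
  · rw [hfix _ le_rfl (by simp)]
  · rw [hfix _ (by simp) le_rfl]
  · simp only [Fin.le_def]
    omega

lemma comp_swap_eq_ite {α β : Type*} (M : α → Fin n → β) (a b : Fin n) :
    (fun i j => M i (Equiv.swap a b j)) =
      fun i (j : Fin n) => if (j : ℕ) = a then M i b else if (j : ℕ) = b then M i a else M i j := by
  funext i j
  simp only [Equiv.swap_apply_def, ← Fin.ext_iff]
  split_ifs <;> simp_all

end

theorem stmt_7 {n : ℕ} (hn : 2 ≤ n) (M : Fin n → Fin n → ℕ)
    (hbin : IsBinary M) (hopt : Optimal M) :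
    Optimal (fun i j => if (j : ℕ) = 0 then M i ⟨1, by omega⟩
      else if (j : ℕ) = 1 then M i ⟨0, by omega⟩ else M i j) ∧
    Optimal (fun i j => if (j : ℕ) = n - 2 then M i ⟨n - 1, by omega⟩
      else if (j : ℕ) = n - 1 then M i ⟨n - 2, by omega⟩ else M i j) :=
  ⟨comp_swap_eq_ite M ⟨0, by omega⟩ ⟨1, by omega⟩ ▸ hopt.comp_swap hbin (by simp),
    comp_swap_eq_ite M ⟨n - 2, by omega⟩ ⟨n - 1, by omega⟩ ▸ hopt.comp_swap hbin (by simp; omega)⟩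
end

section
/- Let M = (m_{i,j}) be an optimal n×n binary matrix. Then the matrix M_r = (r_{i,j}) with the column order reversed, defined by r_{i,j} = m_{i,n−j+1}, is optimal. -/
/-!
Column `j` of the reversed matrix is column `n - 1 - j` of `M`, so an assignment mapping of
`M` from column `n - 2 - j` to column `n - 1 - j`, inverted, goes from column `j` to column
`j + 1` of the reversed matrix. Since every row of a binary `k`-uniform matrix sums to `k`, the
reversed partial row sum `S'_{i,j}` equals `k - S_{i,n-2-j}`; this reverses the inequality of
Condition (2), exactly as the inversion of the mapping requires.
-/

section

variable {n k : ℕ} {M : Fin n → Fin n → ℕ}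

lemma sum_row_eq_of_isUniform (hbin : IsBinary M) (hk : IsUniform k M) (i : Fin n) :
    ∑ l, M i l = k := by
  rw [← hk.1 i, Finset.card_filter]
  refine Finset.sum_congr rfl fun l _ => ?_
  rcases hbin i l with h | h <;> simp [h]

lemma isUniform_comp_rev (hk : IsUniform k M) : IsUniform k (fun i j => M i j.rev) :=
  ⟨fun i => (Finset.card_equiv Fin.revPerm fun j => by simp).trans (hk.1 i), fun j => hk.2 j.rev⟩

lemma rowSum_rev_add_rowSum_rev (i : Fin n) {a b : Fin n} (hab : (b : ℕ) + 1 = a) :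
    RowSum (fun i j => M i j.rev) i b + RowSum M i a.rev = ∑ l, M i l := by
  have hcompl : (Finset.Ici b.rev)ᶜ = Finset.Iic a.rev := by
    ext l
    simp only [Finset.mem_compl, Finset.mem_Ici, Finset.mem_Iic, not_le, Fin.le_def,
      Fin.val_rev]
    omega
  have hrev : RowSum (fun i j => M i j.rev) i b = ∑ l ∈ Finset.Ici b.rev, M i l := by
    rw [RowSum, ← Fin.map_revPerm_Iic, Finset.sum_map]
    rfl
  rw [hrev, RowSum, ← hcompl]
  exact Finset.sum_add_sum_compl _ _

lemma exists_assignment_rev (hbin : IsBinary M) (hk : IsUniform k M) {a b : Fin n}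
    (hab : (b : ℕ) + 1 = a)
    (h : ∃ φ, IsAssignment M a.rev b.rev φ ∧ Cond2 M a.rev φ) :
    ∃ ψ, IsAssignment (fun i j => M i j.rev) b a ψ ∧ Cond2 (fun i j => M i j.rev) b ψ := by
  obtain ⟨φ, hφ, hφ2⟩ := h
  have : Nonempty (Fin n) := ⟨a⟩
  have hinv := hφ.invOn_invFunOn
  have hψ : IsAssignment (fun i j => M i j.rev) b a (Function.invFunOn φ {i | M i a.rev = 1}) :=
    hφ.symm hinv.symm
  refine ⟨_, hψ, fun i hi => ?_⟩
  set ψ := Function.invFunOn φ {i | M i a.rev = 1}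
  have hψi : M (ψ i) a.rev = 1 := hψ.mapsTo hi
  have hle : RowSum M i a.rev ≤ RowSum M (ψ i) a.rev := by
    simpa only [hinv.2 hi] using hφ2 (ψ i) hψi
  have hi' := rowSum_rev_add_rowSum_rev (M := M) i hab
  have hψi' := rowSum_rev_add_rowSum_rev (M := M) (ψ i) hab
  rw [sum_row_eq_of_isUniform hbin hk] at hi' hψi'
  omega

end

/-- reversing the column order of an optimal binary matrix yields an
optimal matrix. -/
theorem stmt_9 {n : ℕ} (M : Fin n → Fin n → ℕ) (hbin : IsBinary M)
    (hopt : Optimal M) :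
    Optimal (fun i j : Fin n => M i ⟨n - 1 - (j : ℕ), by have := j.isLt; omega⟩) := by
  obtain ⟨⟨k, hk⟩, hassign⟩ := hopt
  have hrev : (fun i j : Fin n => M i ⟨n - 1 - (j : ℕ), by have := j.isLt; omega⟩) =
      fun i j => M i j.rev := by
    funext i j
    congr 1
    ext
    simp only [Fin.val_rev]
    omega
  rw [hrev]
  refine ⟨⟨k, isUniform_comp_rev hk⟩, fun j hj => exists_assignment_rev hbin hk rfl ?_⟩
  obtain ⟨φ, hφ, hφ2⟩ := hassign (n - 2 - j) (by omega)
  have ha : (⟨n - 2 - j, by omega⟩ : Fin n) = (⟨j + 1, hj⟩ : Fin n).rev := by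
    ext; simp only [Fin.val_rev]; omega
  have hb : (⟨n - 2 - j + 1, by omega⟩ : Fin n) = (⟨j, by omega⟩ : Fin n).rev := by
    ext; simp only [Fin.val_rev]; omega
  rw [ha, hb] at hφ
  rw [ha] at hφ2
  exact ⟨φ, hφ, hφ2⟩
end

section
/- Let M = (m_{i,j}) be an optimal n×n binary matrix. Then the binary dual matrix M̄ = (d_{i,j}) defined by d_{i,j} = 1 − m_{i,j} is optimal. -/
/-!
A bijection `φ : A → B` with `f ∘ φ ≤ f` exists exactly when `#A = #B` and, for every threshold
`t`, `A` has at most as many elements with `f ≤ t` as `B` (Hall's theorem gives the converse).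
Passing to complements reverses these counting inequalities, so the zero sets of two consecutive
columns admit a bijection `ψ` with `f ≤ f ∘ ψ`, where `f i = S_{i,j}`. Since the partial row sums
of the dual matrix are `(j + 1) - S_{i,j}`, this is Condition (2) for the dual matrix.
-/

open Finset

section Domination

variable {ι α : Type*} [LinearOrder α] {A B : Finset ι} {f : ι → α} {φ : ι → ι}

theorem card_filter_le_card_filter_of_bijOn (hφ : Set.BijOn φ A B)
    (hle : ∀ i ∈ A, f (φ i) ≤ f i) {p : α → Prop} [DecidablePred p] (hp : Antitone p) :
    #{i ∈ A | p (f i)} ≤ #{i ∈ B | p (f i)} := by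
  refine card_le_card_of_injOn φ (fun i hi => ?_) (hφ.injOn.mono (filter_subset _ _))
  rw [mem_coe, mem_filter] at hi ⊢
  exact ⟨hφ.mapsTo hi.1, hp (hle i hi.1) hi.2⟩

theorem exists_bijOn_of_card_filter_le [DecidableEq ι] (hcard : #A = #B)
    (hcount : ∀ t, #{i ∈ A | f i ≤ t} ≤ #{i ∈ B | f i ≤ t}) :
    ∃ φ : ι → ι, Set.BijOn φ A B ∧ ∀ i ∈ A, f (φ i) ≤ f i := by
  -- Hall's condition: a union of the sets `{j ∈ B | f j ≤ f x}` is the largest of them.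
  have hall (s : Finset A) : #s ≤ #(s.biUnion fun x => {j ∈ B | f j ≤ f x}) := by
    rcases s.eq_empty_or_nonempty with rfl | hs
    · simp
    obtain ⟨x, hx, hmax⟩ := s.exists_max_image (fun x => f x) hs
    calc #s ≤ #{i ∈ A | f i ≤ f x} :=
          card_le_card_of_injOn Subtype.val (fun y hy => mem_filter.2 ⟨y.2, hmax y hy⟩)
            Subtype.val_injective.injOn
      _ ≤ #{j ∈ B | f j ≤ f x} := hcount _
      _ ≤ _ := card_le_card (subset_biUnion_of_mem (fun x : A => {j ∈ B | f j ≤ f x}) hx)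
  obtain ⟨g, hg, hgB⟩ := (all_card_le_biUnion_card_iff_exists_injective _).1 hall
  simp only [mem_filter] at hgB
  let φ i := if h : i ∈ A then g ⟨i, h⟩ else i
  have hφ {i} (hi : i ∈ A) : φ i = g ⟨i, hi⟩ := dif_pos hi
  have hmaps : Set.MapsTo φ A B := fun i hi => by rw [hφ hi]; exact (hgB _).1
  have hinj : Set.InjOn φ A := fun i hi i' hi' h => by
    rw [hφ hi, hφ hi'] at h
    exact congrArg Subtype.val (hg h)
  refine ⟨φ, ⟨hmaps, hinj, surjOn_of_injOn_of_card_le φ hmaps hinj hcard.ge⟩, fun i hi => ?_⟩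
  rw [hφ hi]
  exact (hgB _).2

variable [Fintype ι] [DecidableEq ι]

theorem card_filter_compl_add_card_filter (A : Finset ι) (p : ι → Prop) [DecidablePred p] :
    #{i ∈ Aᶜ | p i} + #{i ∈ A | p i} = #{i | p i} := by
  rw [← card_union_of_disjoint (disjoint_filter_filter disjoint_compl_left), ← filter_union,
    union_comm, union_compl]

theorem card_compl_filter_le_card_compl_filter_of_bijOn (hφ : Set.BijOn φ A B)
    (hle : ∀ i ∈ A, f (φ i) ≤ f i) (t : α) :
    #{i ∈ Aᶜ | t ≤ f i} ≤ #{i ∈ Bᶜ | t ≤ f i} := by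
  have hA := card_filter_compl_add_card_filter A (fun i => t ≤ f i)
  have hB := card_filter_compl_add_card_filter B (fun i => t ≤ f i)
  have hA' := card_filter_add_card_filter_not (s := A) (fun i => t ≤ f i)
  have hB' := card_filter_add_card_filter_not (s := B) (fun i => t ≤ f i)
  have hlt := card_filter_le_card_filter_of_bijOn hφ hle (p := fun a => ¬ t ≤ a)
    fun a b hab h h' => h (h'.trans hab)
  have hcard := hφ.finsetCard_eq
  omega

theorem exists_bijOn_compl_of_bijOn (hφ : Set.BijOn φ A B) (hle : ∀ i ∈ A, f (φ i) ≤ f i) :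
    ∃ ψ : ι → ι, Set.BijOn ψ ↑Aᶜ ↑Bᶜ ∧ ∀ i ∈ Aᶜ, f i ≤ f (ψ i) :=
  exists_bijOn_of_card_filter_le (f := OrderDual.toDual ∘ f)
    (by rw [card_compl, card_compl, hφ.finsetCard_eq])
    fun t => by
      simpa [OrderDual.toDual_le] using
        card_compl_filter_le_card_compl_filter_of_bijOn hφ hle (OrderDual.ofDual t)

theorem filter_one_sub_eq_one_eq_compl {v : ι → ℕ} (hv : ∀ i, v i = 0 ∨ v i = 1) :
    univ.filter (fun i => 1 - v i = 1) = (univ.filter fun i => v i = 1)ᶜ := by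
  ext i
  rcases hv i with h | h <;> simp [h]

end Domination

namespace IsBinary

variable {n : ℕ} {M : Fin n → Fin n → ℕ}

theorem isUniform_compl (hM : IsBinary M) {k : ℕ} (hk : IsUniform k M) :
    IsUniform (n - k) (fun i j => 1 - M i j) := by
  constructor
  · intro i
    show #{j | 1 - M i j = 1} = _
    rw [filter_one_sub_eq_one_eq_compl (hM i), card_compl, Fintype.card_fin, hk.1 i]
  · intro j
    show #{i | 1 - M i j = 1} = _
    rw [filter_one_sub_eq_one_eq_compl (hM · j), card_compl, Fintype.card_fin, hk.2 j]

theorem rowSum_compl_add_rowSum (hM : IsBinary M) (i j : Fin n) :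
    RowSum (fun i j => 1 - M i j) i j + RowSum M i j = #(Iic j) := by
  rw [RowSum, RowSum, ← sum_add_distrib, card_eq_sum_ones]
  exact sum_congr rfl fun l _ => by rcases hM i l with h | h <;> simp [h]

theorem exists_assignment_compl (hM : IsBinary M) {j j' : Fin n} {φ : Fin n → Fin n}
    (hφ : IsAssignment M j j' φ) (hφ₂ : Cond2 M j φ) :
    ∃ ψ, IsAssignment (fun i j => 1 - M i j) j j' ψ ∧ Cond2 (fun i j => 1 - M i j) j ψ := by
  have hcol (j : Fin n) :
      {i | 1 - M i j = 1} = (↑(univ.filter fun i => M i j = 1)ᶜ : Set (Fin n)) := by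
    rw [← coe_filter_univ, filter_one_sub_eq_one_eq_compl (hM · j), coe_compl]
  rw [IsAssignment, ← coe_filter_univ, ← coe_filter_univ] at hφ
  obtain ⟨ψ, hψ, hle⟩ := exists_bijOn_compl_of_bijOn (f := (RowSum M · j)) hφ
    fun i hi => hφ₂ i (mem_filter.1 hi).2
  refine ⟨ψ, by rw [IsAssignment, hcol, hcol]; exact hψ, fun i hi => ?_⟩
  have hi : i ∈ (univ.filter fun i => M i j = 1)ᶜ := by
    rw [← filter_one_sub_eq_one_eq_compl (hM · j)]
    exact mem_filter.2 ⟨mem_univ i, hi⟩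
  have hψi := hle i hi
  have hsum_i := hM.rowSum_compl_add_rowSum i j
  have hsum_ψi := hM.rowSum_compl_add_rowSum (ψ i) j
  omega

end IsBinary

/-- the entrywise binary complement of an optimal binary matrix is
optimal. -/
theorem stmt_10 {n : ℕ} (M : Fin n → Fin n → ℕ) (hbin : IsBinary M)
    (hopt : Optimal M) :
    Optimal (fun i j => 1 - M i j) := by
  obtain ⟨⟨k, hk⟩, hassign⟩ := hopt
  refine ⟨⟨n - k, hbin.isUniform_compl hk⟩, fun j hj => ?_⟩
  obtain ⟨φ, hφ, hφ₂⟩ := hassign j hj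
  exact hbin.exists_assignment_compl hφ hφ₂
end

section
/- Let M = (m_{i,j}) be an optimal n×n k-uniform binary matrix, let 1 ≤ j ≤ n−1, and suppose i1 ∈ X_{1,0}^j, i2 ∈ X_{0,1}^j and S_{i1,j} = S_{i2,j}. Let M' be the matrix obtained from M by replacing rows R_{i1} and R_{i2} with R'_{i1} = (m_{i1,1},…,m_{i1,j}, m_{i2,j+1},…,m_{i2,n}) and R'_{i2} = (m_{i2,1},…,m_{i2,j}, m_{i1,j+1},…,m_{i1,n}) respectively (all other rows unchanged). Then M' is k-uniform and optimal. -/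
/-- The matrix obtained from `M` by swapping the tails (columns after `j`,
0-indexed: columns `> j`) of rows `i1` and `i2`. -/
def swapTails {n : ℕ} (M : Fin n → Fin n → ℕ) (i1 i2 : Fin n) (j : ℕ) :
    Fin n → Fin n → ℕ :=
  fun i l =>
    if i = i1 then (if (l : ℕ) ≤ j then M i1 l else M i2 l)
    else if i = i2 then (if (l : ℕ) ≤ j then M i2 l else M i1 l)
    else M i l

/-!
Write `σ` for the transposition of rows `i1` and `i2`. The new matrix has row `i` of `M` in
columns `≤ j` and row `σ i` of `M` in columns `> j`. Since `σ` preserves the partial sums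
`S_{·,j}`, every partial sum `S'_{i,l}` is either `S_{i,l}` (for `l ≤ j`) or `S_{σ i,l}`
(for `l ≥ j`), and both descriptions hold at `l = j`. Hence each row still has `k` ones,
each column of the new matrix is a column of `M` with its rows permuted, and an assignment
mapping `φ` of `M` between columns `l` and `l + 1` transports to `σ⁻¹ ∘ φ`, or `σ⁻¹ ∘ φ ∘ σ`,
or `φ` itself, according as `l = j`, `l > j` or `l < j`.
-/

open Finset

lemma card_filter_eq_one_eq_sum {α : Type*} (s : Finset α) (f : α → ℕ)
    (hf : ∀ x, f x = 0 ∨ f x = 1) : #(s.filter fun x => f x = 1) = ∑ x ∈ s, f x := by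
  rw [card_filter]
  exact sum_congr rfl fun x _ => by rcases hf x with h | h <;> simp [h]

section Transport

variable {n : ℕ} {M M' : Fin n → Fin n → ℕ} {a b : Fin n} {φ : Fin n → Fin n}
  (τ ρ : Equiv.Perm (Fin n))

lemma IsAssignment.of_perm (ha : ∀ i, M' i a = M (τ i) a) (hb : ∀ i, M' i b = M (ρ i) b)
    (hφ : IsAssignment M a b φ) : IsAssignment M' a b (ρ.symm ∘ φ ∘ τ) := by
  have hA : {i | M' i a = 1} = τ ⁻¹' {i | M i a = 1} := by ext i; simp [ha]
  have hB : {i | M' i b = 1} = ρ.symm '' {i | M i b = 1} := by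
    rw [Equiv.image_symm_eq_preimage]; ext i; simp [hb]
  have hτ : Set.BijOn τ (τ ⁻¹' {i | M i a = 1}) {i | M i a = 1} := by
    simpa only [Equiv.image_preimage] using τ.bijOn_image (s := τ ⁻¹' {i | M i a = 1})
  rw [IsAssignment, hA, hB]
  exact ρ.symm.bijOn_image.comp (hφ.comp hτ)

lemma Cond2.of_perm (ha : ∀ i, M' i a = M (τ i) a)
    (hτ : ∀ i, RowSum M' i a = RowSum M (τ i) a) (hρ : ∀ i, RowSum M' i a = RowSum M (ρ i) a)
    (hφ : Cond2 M a φ) : Cond2 M' a (ρ.symm ∘ φ ∘ τ) := by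
  intro i hi
  calc RowSum M' (ρ.symm (φ (τ i))) a = RowSum M (φ (τ i)) a := by
        rw [hρ, Equiv.apply_symm_apply]
    _ ≤ RowSum M (τ i) a := hφ _ (by rwa [← ha])
    _ = RowSum M' i a := (hτ i).symm

end Transport

def permuteTails {n : ℕ} (M : Fin n → Fin n → ℕ) (σ : Equiv.Perm (Fin n)) (j : Fin n) :
    Fin n → Fin n → ℕ :=
  fun i l => if l ≤ j then M i l else M (σ i) l

lemma swapTails_eq_permuteTails {n : ℕ} (M : Fin n → Fin n → ℕ) (i1 i2 j : Fin n) :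
    swapTails M i1 i2 j = permuteTails M (Equiv.swap i1 i2) j := by
  ext i l
  simp only [swapTails, permuteTails, Fin.le_def, Equiv.swap_apply_def]
  split_ifs <;> simp_all

section PermuteTails

variable {n : ℕ} {M : Fin n → Fin n → ℕ} {σ : Equiv.Perm (Fin n)} {j : Fin n}

lemma permuteTails_of_le {i l : Fin n} (h : l ≤ j) : permuteTails M σ j i l = M i l :=
  if_pos h

lemma permuteTails_of_not_le {i l : Fin n} (h : ¬l ≤ j) :
    permuteTails M σ j i l = M (σ i) l :=
  if_neg h

lemma IsBinary.permuteTails (hbin : IsBinary M) : IsBinary (permuteTails M σ j) := by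
  intro i l
  unfold _root_.permuteTails
  split_ifs <;> exact hbin _ _

lemma rowSum_permuteTails_of_le {i a : Fin n} (h : a ≤ j) :
    RowSum (permuteTails M σ j) i a = RowSum M i a :=
  sum_congr rfl fun _ hl => permuteTails_of_le ((mem_Iic.1 hl).trans h)

variable (hσ : ∀ i, RowSum M (σ i) j = RowSum M i j)
include hσ

lemma sum_permuteTails_of_Iic_subset {s : Finset (Fin n)} (hs : Iic j ⊆ s) (i : Fin n) :
    ∑ l ∈ s, permuteTails M σ j i l = ∑ l ∈ s, M (σ i) l := by
  have hhead : s.filter (· ≤ j) = Iic j := by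
    ext l
    simpa using fun h => hs (mem_Iic.2 h)
  rw [← sum_filter_add_sum_filter_not s (· ≤ j), ← sum_filter_add_sum_filter_not s (· ≤ j), hhead]
  congr 1
  · exact (rowSum_permuteTails_of_le le_rfl).trans (hσ i).symm
  · exact sum_congr rfl fun _ hl => permuteTails_of_not_le (mem_filter.1 hl).2

lemma rowSum_permuteTails_of_ge {i a : Fin n} (h : j ≤ a) :
    RowSum (permuteTails M σ j) i a = RowSum M (σ i) a :=
  sum_permuteTails_of_Iic_subset hσ (Iic_subset_Iic.2 h) i

lemma IsUniform.permuteTails {k : ℕ} (hbin : IsBinary M) (hunif : IsUniform k M) :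
    IsUniform k (permuteTails M σ j) := by
  refine ⟨fun i => ?_, fun l => ?_⟩
  · rw [card_filter_eq_one_eq_sum _ _ (hbin.permuteTails i),
      sum_permuteTails_of_Iic_subset hσ (subset_univ _), ← card_filter_eq_one_eq_sum _ _ (hbin _)]
    exact hunif.1 (σ i)
  · rw [← hunif.2 l]
    by_cases hl : l ≤ j
    · simp only [permuteTails_of_le hl]
    · exact card_equiv σ fun i => by simp [permuteTails_of_not_le hl]

lemma Optimal.permuteTails (hopt : Optimal M) (hbin : IsBinary M) :
    Optimal (permuteTails M σ j) := by
  obtain ⟨⟨k, hunif⟩, hassign⟩ := hopt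
  refine ⟨⟨k, hunif.permuteTails hσ hbin⟩, fun a ha => ?_⟩
  obtain ⟨φ, hφ, hφ2⟩ := hassign a ha
  set A : Fin n := ⟨a, Nat.lt_of_succ_lt ha⟩
  set B : Fin n := ⟨a + 1, ha⟩
  by_cases hB : B ≤ j
  · have hA : A ≤ j := le_trans (Fin.mk_le_mk.2 a.le_succ) hB
    exact ⟨_, hφ.of_perm 1 1 (fun _ => permuteTails_of_le hA) (fun _ => permuteTails_of_le hB),
      hφ2.of_perm 1 1 (fun _ => permuteTails_of_le hA) (fun _ => rowSum_permuteTails_of_le hA)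
        (fun _ => rowSum_permuteTails_of_le hA)⟩
  by_cases hA : A ≤ j
  · have hjA : j ≤ A := Fin.le_def.2 (Nat.lt_succ_iff.1 (Fin.lt_def.1 (not_le.1 hB)))
    exact ⟨_, hφ.of_perm 1 σ (fun _ => permuteTails_of_le hA) (fun _ => permuteTails_of_not_le hB),
      hφ2.of_perm 1 σ (fun _ => permuteTails_of_le hA) (fun _ => rowSum_permuteTails_of_le hA)
        (fun _ => rowSum_permuteTails_of_ge hσ hjA)⟩
  · have hjA : j ≤ A := (not_le.1 hA).le
    exact ⟨_, hφ.of_perm σ σ (fun _ => permuteTails_of_not_le hA)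
        (fun _ => permuteTails_of_not_le hB),
      hφ2.of_perm σ σ (fun _ => permuteTails_of_not_le hA)
        (fun _ => rowSum_permuteTails_of_ge hσ hjA) (fun _ => rowSum_permuteTails_of_ge hσ hjA)⟩

end PermuteTails

lemma rowSum_swap_apply {n : ℕ} {M : Fin n → Fin n → ℕ} {i1 i2 j : Fin n}
    (hS : RowSum M i1 j = RowSum M i2 j) (i : Fin n) :
    RowSum M (Equiv.swap i1 i2 i) j = RowSum M i j := by
  rw [Equiv.swap_apply_def]
  split_ifs with h1 h2
  · rw [h1, hS]
  · rw [h2, hS]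
  · rfl

theorem stmt_11_general {n k : ℕ} (M : Fin n → Fin n → ℕ)
    (hbin : IsBinary M) (hunif : IsUniform k M) (hopt : Optimal M)
    (j : ℕ) (hj : j + 1 < n) (i1 i2 : Fin n)
    (hS : RowSum M i1 ⟨j, Nat.lt_of_succ_lt hj⟩ = RowSum M i2 ⟨j, Nat.lt_of_succ_lt hj⟩) :
    IsUniform k (swapTails M i1 i2 j) ∧ Optimal (swapTails M i1 i2 j) := by
  rw [show swapTails M i1 i2 j = _ from swapTails_eq_permuteTails M i1 i2 ⟨j, Nat.lt_of_succ_lt hj⟩]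
  exact ⟨hunif.permuteTails (rowSum_swap_apply hS) hbin,
    hopt.permuteTails (rowSum_swap_apply hS) hbin⟩

/-- if `M` is an optimal `k`-uniform binary matrix, `i1 ∈ X₁₀ʲ`,
`i2 ∈ X₀₁ʲ` and `S_{i1,j} = S_{i2,j}`, then swapping the tails of rows `i1` and `i2`
after column `j` yields a `k`-uniform optimal matrix. -/
theorem stmt_11 {n k : ℕ} (M : Fin n → Fin n → ℕ)
    (hbin : IsBinary M) (hunif : IsUniform k M) (hopt : Optimal M)
    (j : ℕ) (hj : j + 1 < n) (i1 i2 : Fin n)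
    (h10 : M i1 ⟨j, Nat.lt_of_succ_lt hj⟩ = 1 ∧ M i1 ⟨j + 1, hj⟩ = 0)
    (h01 : M i2 ⟨j, Nat.lt_of_succ_lt hj⟩ = 0 ∧ M i2 ⟨j + 1, hj⟩ = 1)
    (hS : RowSum M i1 ⟨j, Nat.lt_of_succ_lt hj⟩ = RowSum M i2 ⟨j, Nat.lt_of_succ_lt hj⟩) :
    IsUniform k (swapTails M i1 i2 j) ∧ Optimal (swapTails M i1 i2 j) :=
  stmt_11_general M hbin hunif hopt j hj i1 i2 hS
end

section
/- Let M = M_{n,k} be the cyclic (n,k)-matrix and let d = gcd(n,k). Then: (i) rows R_i and R_j of M are equal if and only if i ≡ j (mod n/d); (ii) columns C_i and C_j of M are equal if and only if there exists q ∈ {0,1,…,n/d − 1} with dq ≤ i, j ≤ d(q+1) − 1 (i.e. ⌊i/d⌋ = ⌊j/d⌋). -/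
open scoped Classical in
/-- The cyclic `(n,k)`-matrix: the `(i,j)` entry equals `1` iff
`j ≡ ik + a (mod n)` for some `0 ≤ a ≤ k − 1`. -/
noncomputable def cyc (n k : ℕ) : Fin n → Fin n → ℕ := fun i j =>
  if ∃ a < k, (j : ℕ) ≡ (i : ℕ) * k + a [MOD n] then 1 else 0

lemma modsub (n x y : ℕ) (hx : x < n) (hy : y < n) :
    (n + x - y) % n = if y ≤ x then x - y else n + x - y := by
  rcases le_or_gt y x with h | h
  · rw [if_pos h, show n + x - y = n + (x - y) by omega, Nat.add_mod_left,
      Nat.mod_eq_of_lt (by omega)]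
  · rw [if_neg (by omega)]
    exact Nat.mod_eq_of_lt (by omega)

lemma mulmod (N d c r : ℕ) (hN : 0 < N) (hr : r < d) :
    (c * d + r) % (N * d) = (c % N) * d + r := by
  conv_lhs => rw [← Nat.div_add_mod c N]
  rw [show (N * (c / N) + c % N) * d + r = (c % N * d + r) + (N*d) * (c/N) by ring,
    Nat.add_mul_mod_self_left]
  refine Nat.mod_eq_of_lt ?_
  have h1 : c % N < N := Nat.mod_lt _ hN
  have h2 : (c % N + 1) * d ≤ N * d := Nat.mul_le_mul_right d h1
  have h3 : (c % N + 1) * d = c % N * d + d := by ring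
  omega

lemma cond_iff (n k : ℕ) (hn : 1 ≤ n) (hk : k ≤ n) (i j : Fin n) :
    (∃ a < k, (j:ℕ) ≡ (i:ℕ)*k + a [MOD n]) ↔ (n + (j:ℕ) - ((i:ℕ)*k)%n)%n < k := by
  set s := ((i:ℕ)*k) % n with hs
  have hsn : s < n := Nat.mod_lt _ (by omega)
  have hjn : (j:ℕ) < n := j.isLt
  constructor
  · rintro ⟨a, ha, hmod⟩
    have hj : (j:ℕ) = (s + a) % n := by
      have h : (j:ℕ) % n = ((i:ℕ)*k + a) % n := hmod
      rw [Nat.mod_eq_of_lt hjn] at h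
      rw [h, Nat.add_mod, ← hs, Nat.mod_eq_of_lt (show a < n by omega)]
    rw [hj]
    rcases lt_or_ge (s + a) n with h | h
    · rw [Nat.mod_eq_of_lt h, show n + (s + a) - s = n + a by omega, Nat.add_mod_left,
        Nat.mod_eq_of_lt (by omega)]
      exact ha
    · have h2 : (s + a) % n = s + a - n := by
        rw [Nat.mod_eq_sub_mod h, Nat.mod_eq_of_lt (by omega)]
      rw [h2, show n + (s + a - n) - s = a by omega, Nat.mod_eq_of_lt (by omega)]
      exact ha
  · intro h
    refine ⟨(n + (j:ℕ) - s) % n, h, ?_⟩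
    show (j:ℕ) % n = ((i:ℕ)*k + (n + (j:ℕ) - s) % n) % n
    rw [Nat.mod_eq_of_lt hjn, Nat.add_mod, ← hs,
      Nat.mod_eq_of_lt (show (n + (j:ℕ) - s) % n < n from Nat.mod_lt _ (by omega)),
      modsub n _ _ hjn hsn]
    rcases le_or_gt s (j:ℕ) with h2 | h2
    · rw [if_pos h2, show s + ((j:ℕ) - s) = (j:ℕ) by omega, Nat.mod_eq_of_lt hjn]
    · rw [if_neg (by omega), show s + (n + (j:ℕ) - s) = n + (j:ℕ) by omega, Nat.add_mod_left,
        Nat.mod_eq_of_lt hjn]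

lemma interval_eq (n k s t : ℕ) (hk0 : 0 < k) (hkn : k < n) (hs : s < n) (ht : t < n)
    (H : ∀ l < n, ((n + l - s) % n < k ↔ (n + l - t) % n < k)) : s = t := by
  have hn : 0 < n := by omega
  have h1 : (n + s - t) % n < k := by
    refine (H s hs).1 ?_
    rw [show n + s - s = n by omega, Nat.mod_self]; exact hk0
  set l2 : ℕ := if 1 ≤ s then s - 1 else n - 1 with hl2def
  have hl2 : l2 < n := by rw [hl2def]; split <;> omega
  have hval : (n + l2 - s) % n = n - 1 := by
    rw [hl2def]
    rcases le_or_gt 1 s with h | h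
    · rw [if_pos h]
      rw [show n + (s - 1) - s = n - 1 by omega, Nat.mod_eq_of_lt (by omega)]
    · rw [if_neg (by omega), show n + (n - 1) - s = n + (n-1) by omega, Nat.add_mod_left,
        Nat.mod_eq_of_lt (by omega)]
  have h2 : ¬ ((n + l2 - t) % n < k) := by
    intro hc
    have := (H l2 hl2).2 hc
    omega
  rw [modsub n s t hs ht] at h1
  rw [modsub n l2 t hl2 ht] at h2
  rw [hl2def] at h2
  by_cases h3 : 1 ≤ s
  · rw [if_pos h3] at h2
    rcases le_or_gt t s with h4 | h4
    · rw [if_pos h4] at h1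
      by_cases h5 : t ≤ s - 1
      · rw [if_pos h5] at h2; omega
      · rw [if_neg h5] at h2; omega
    · rw [if_neg (by omega)] at h1
      rw [if_neg (by omega)] at h2; omega
  · rw [if_neg h3] at h2
    have hs0 : s = 0 := by omega
    subst hs0
    rcases Nat.eq_zero_or_pos t with h4 | h4
    · omega
    · rw [if_neg (by omega)] at h1
      rw [if_pos (by omega)] at h2
      omega

lemma interval_eq' (N K a b : ℕ) (hK0 : 0 < K) (hKN : K < N) (ha : a < N) (hb : b < N)
    (H : ∀ m < N, ((N + a - m) % N < K ↔ (N + b - m) % N < K)) : a = b := by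
  have hN : 0 < N := by omega
  have h1 : (N + b - a) % N < K := by
    refine (H a ha).1 ?_
    rw [show N + a - a = N by omega, Nat.mod_self]; exact hK0
  set m2 : ℕ := if a + 1 < N then a + 1 else 0 with hm2def
  have hm2 : m2 < N := by rw [hm2def]; split <;> omega
  have hval : (N + a - m2) % N = N - 1 := by
    rw [hm2def]
    rcases lt_or_ge (a+1) N with h | h
    · rw [if_pos h]
      rw [show N + a - (a+1) = N - 1 by omega, Nat.mod_eq_of_lt (by omega)]
    · rw [if_neg (by omega), show N + a - 0 = N + a by omega, Nat.add_mod_left,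
        Nat.mod_eq_of_lt (by omega)]
      omega
  have h2 : ¬ ((N + b - m2) % N < K) := by
    intro hc
    have := (H m2 hm2).2 hc
    omega
  rw [modsub N b a hb ha] at h1
  rw [modsub N b m2 hb hm2] at h2
  rw [hm2def] at h2
  by_cases h3 : a + 1 < N
  · rw [if_pos h3] at h2
    rcases le_or_gt a b with h4 | h4
    · rw [if_pos h4] at h1
      by_cases h5 : a + 1 ≤ b
      · rw [if_pos h5] at h2; omega
      · rw [if_neg h5] at h2; omega
    · rw [if_neg (by omega)] at h1
      rw [if_neg (by omega)] at h2; omega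
  · rw [if_neg h3] at h2
    rw [if_pos (by omega)] at h2
    rcases le_or_gt a b with h4 | h4
    · omega
    · rw [if_neg (by omega)] at h1
      omega

lemma surj (n k : ℕ) (hn : 1 ≤ n) (m : ℕ)
    (hm : m < n / Nat.gcd n k) : ∃ l : Fin n, ((l:ℕ) * k) % n = m * Nat.gcd n k := by
  set d := Nat.gcd n k with hd
  have hdpos : 0 < d := Nat.gcd_pos_of_pos_left k hn
  have hdn : d ∣ n := Nat.gcd_dvd_left n k
  have hdk : d ∣ k := Nat.gcd_dvd_right n k
  set N := n / d with hN
  have hNd : N * d = n := Nat.div_mul_cancel hdn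
  have hNpos : 0 < N := by omega
  have hco : Nat.Coprime (k / d) N := (Nat.coprime_div_gcd_div_gcd (m := n) (n := k) hdpos).symm
  haveI : NeZero N := ⟨by omega⟩
  set u : (ZMod N)ˣ := ZMod.unitOfCoprime (k/d) hco with hu
  set l0 : ℕ := (((m : ZMod N)) * ((u⁻¹ : (ZMod N)ˣ) : ZMod N)).val with hl0def
  have hl0 : l0 < N := ZMod.val_lt _
  have hcast : ((l0 * (k/d) : ℕ) : ZMod N) = (m : ZMod N) := by
    push_cast
    rw [hl0def, ZMod.natCast_val, ZMod.cast_id]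
    have hku : ((k/d : ℕ) : ZMod N) = (u : ZMod N) := (ZMod.coe_unitOfCoprime _ hco).symm
    rw [hku, mul_assoc, Units.inv_mul, mul_one]
  have hmod : (l0 * (k/d)) % N = m := by
    have h1 := (ZMod.natCast_eq_natCast_iff _ _ _).mp hcast
    have h2 : (l0 * (k/d)) % N = m % N := h1
    rw [Nat.mod_eq_of_lt hm] at h2
    exact h2
  have hNn : N ≤ n := Nat.div_le_self n d
  refine ⟨⟨l0, by omega⟩, ?_⟩
  show (l0 * k) % n = m * d
  have hkd : k / d * d = k := Nat.div_mul_cancel hdk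
  have hlk : l0 * k = (l0 * (k/d)) * d := by rw [mul_assoc, hkd]
  calc (l0 * k) % n = ((l0 * (k/d)) * d + 0) % (N * d) := by
        rw [add_zero, hNd, hlk]
    _ = ((l0 * (k/d)) % N) * d + 0 := mulmod N d _ 0 hNpos hdpos
    _ = m * d := by rw [hmod, add_zero]

lemma evalB (n k m x : ℕ) (hn : 1 ≤ n) (hx : x < n)
    (hm : m < n / Nat.gcd n k) :
    ((n + x - m * Nat.gcd n k) % n < k ↔
      (n / Nat.gcd n k + x / Nat.gcd n k - m) % (n / Nat.gcd n k) < k / Nat.gcd n k) := by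
  set d := Nat.gcd n k with hd
  have hdpos : 0 < d := Nat.gcd_pos_of_pos_left k hn
  have hdn : d ∣ n := Nat.gcd_dvd_left n k
  have hdk : d ∣ k := Nat.gcd_dvd_right n k
  set N := n / d with hN
  set K := k / d with hK
  have hNd : N * d = n := Nat.div_mul_cancel hdn
  have hKd : K * d = k := Nat.div_mul_cancel hdk
  set a := x / d with ha
  set r := x % d with hr
  have hx' : a * d + r = x := by rw [ha, hr, mul_comm]; exact Nat.div_add_mod x d
  have hrd : r < d := Nat.mod_lt _ hdpos
  have haN : a < N := by
    rw [ha, hN]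
    exact Nat.div_lt_div_of_lt_of_dvd hdn hx
  have hNpos : 0 < N := by omega
  have step1 : n + x - m * d = (N + a - m) * d + r := by
    have e1 : (N + a - m) * d = (N + a) * d - m * d := Nat.sub_mul _ _ _
    have e2 : (N + a) * d = N * d + a * d := by ring
    have e3 : m * d ≤ N * d := Nat.mul_le_mul_right d (le_of_lt hm)
    omega
  rw [step1, ← hNd, mulmod N d _ r hNpos hrd]
  have hc : (N + a - m) % N < N := Nat.mod_lt _ hNpos
  rw [← hKd]
  constructor
  · intro h
    by_contra hcon
    have : K * d ≤ ((N + a - m) % N) * d := Nat.mul_le_mul_right d (by omega)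
    omega
  · intro h
    have h4 : ((N + a - m) % N + 1) * d ≤ K * d := Nat.mul_le_mul_right d (by omega)
    have e : ((N + a - m) % N + 1) * d = ((N + a - m) % N) * d + d := by ring
    omega

/-- for the cyclic `(n,k)`-matrix with `d = gcd(n,k)`:
(i) rows `i` and `j` coincide iff `i ≡ j (mod n/d)`;
(ii) columns `i` and `j` coincide iff `dq ≤ i, j ≤ d(q+1) − 1` for some
`q ∈ {0, …, n/d − 1}`. -/
theorem stmt_16 (n k : ℕ) (hn : 1 ≤ n) (hk : k ≤ n) :
    (∀ i j : Fin n,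
      (∀ l, cyc n k i l = cyc n k j l) ↔ (i : ℕ) ≡ (j : ℕ) [MOD n / Nat.gcd n k]) ∧
    (∀ i j : Fin n,
      (∀ l, cyc n k l i = cyc n k l j) ↔
      ∃ q : ℕ, q ≤ n / Nat.gcd n k - 1 ∧
        Nat.gcd n k * q ≤ (i : ℕ) ∧ (i : ℕ) ≤ Nat.gcd n k * (q + 1) - 1 ∧
        Nat.gcd n k * q ≤ (j : ℕ) ∧ (j : ℕ) ≤ Nat.gcd n k * (q + 1) - 1) := by
  classical
  have hcyc : ∀ i j : Fin n,
      cyc n k i j = if (n + (j:ℕ) - ((i:ℕ)*k)%n)%n < k then 1 else 0 := by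
    intro i j
    simp only [cyc]
    exact if_congr (cond_iff n k hn hk i j) rfl rfl
  have key : ∀ p q r s : Fin n, (cyc n k p q = cyc n k r s ↔
      (((n + (q:ℕ) - ((p:ℕ)*k)%n)%n < k) ↔ ((n + (s:ℕ) - ((r:ℕ)*k)%n)%n < k))) := by
    intro p q r s
    rw [hcyc, hcyc]
    by_cases h1 : (n + (q:ℕ) - ((p:ℕ)*k)%n)%n < k <;>
      by_cases h2 : (n + (s:ℕ) - ((r:ℕ)*k)%n)%n < k <;>
      simp [h1, h2]
  set d := Nat.gcd n k with hd
  have hdpos : 0 < d := Nat.gcd_pos_of_pos_left k hn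
  have hdn : d ∣ n := Nat.gcd_dvd_left n k
  have hdk : d ∣ k := Nat.gcd_dvd_right n k
  set N := n / d with hN
  set K := k / d with hK
  have hNd : N * d = n := Nat.div_mul_cancel hdn
  have hKd : K * d = k := Nat.div_mul_cancel hdk
  have hNpos : 0 < N := Nat.div_pos (Nat.le_of_dvd (by omega) hdn) hdpos
  -- trivial cases: all entries of the matrix are equal
  have htriv : (k = 0 ∨ k = n) → ∀ p q r s : Fin n, cyc n k p q = cyc n k r s := by
    rintro (rfl | rfl) p q r s
    · rw [hcyc, hcyc, if_neg (by omega), if_neg (by omega)]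
    · rw [hcyc, hcyc, if_pos (Nat.mod_lt _ (by omega)), if_pos (Nat.mod_lt _ (by omega))]
  have hNtriv : (k = 0 ∨ k = n) → N = 1 := by
    rintro (rfl | rfl)
    · rw [hN, hd, Nat.gcd_zero_right, Nat.div_self (by omega)]
    · rw [hN, hd, Nat.gcd_self, Nat.div_self (by omega)]
  constructor
  · -- rows
    intro i j
    by_cases htk : k = 0 ∨ k = n
    · constructor
      · intro _
        rw [hNtriv htk]
        exact Nat.modEq_one
      · intro _ l
        exact htriv htk i l j l
    · push_neg at htk
      have hk0 : 0 < k := by omega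
      have hkn : k < n := by omega
      constructor
      · intro H
        have hst : ((i:ℕ)*k) % n = ((j:ℕ)*k) % n := by
          refine interval_eq n k _ _ hk0 hkn (Nat.mod_lt _ (by omega)) (Nat.mod_lt _ (by omega))
            (fun l hl => ?_)
          exact (key i ⟨l, hl⟩ j ⟨l, hl⟩).mp (H ⟨l, hl⟩)
        exact Nat.ModEq.cancel_right_div_gcd (by omega) hst
      · intro H l
        have h2 : ((i:ℕ)*k) ≡ ((j:ℕ)*k) [MOD n] := by
          have h3 : ((i:ℕ)*k) ≡ ((j:ℕ)*k) [MOD N * k] := H.mul_right' k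
          refine h3.of_dvd ⟨K, ?_⟩
          rw [← hNd, ← hKd]; ring
        exact (key i l j l).mpr (by rw [Nat.ModEq] at h2; rw [h2])
  · -- columns
    intro i j
    by_cases htk : k = 0 ∨ k = n
    · constructor
      · intro _
        have hdn' : d = n := by rw [← hNd, hNtriv htk, one_mul]
        refine ⟨0, by omega, by omega, ?_, by omega, ?_⟩
        · simp only [zero_add, mul_one]
          have hi := i.isLt
          omega
        · simp only [zero_add, mul_one]
          have hj := j.isLt
          omega
      · intro _ l
        exact htriv htk l i l j
    · push_neg at htk
      have hk0 : 0 < k := by omega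
      have hkn : k < n := by omega
      have hKpos : 0 < K := by
        rw [hK]; exact Nat.div_pos (Nat.le_of_dvd hk0 hdk) hdpos
      have hKN : K < N := Nat.div_lt_div_of_lt_of_dvd hdn hkn
      have haN : (i:ℕ)/d < N := Nat.div_lt_div_of_lt_of_dvd hdn i.isLt
      have hbN : (j:ℕ)/d < N := Nat.div_lt_div_of_lt_of_dvd hdn j.isLt
      constructor
      · intro H
        have hab : (i:ℕ)/d = (j:ℕ)/d := by
          refine interval_eq' N K _ _ hKpos hKN haN hbN (fun m hm => ?_)
          obtain ⟨l, hl⟩ := surj n k hn m hm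
          have h1 := (key l i l j).mp (H l)
          rw [hl] at h1
          have e1 := evalB n k m (i:ℕ) hn i.isLt hm
          have e2 := evalB n k m (j:ℕ) hn j.isLt hm
          exact e1.symm.trans (h1.trans e2)
        refine ⟨(i:ℕ)/d, by omega, ?_, ?_, ?_, ?_⟩
        · have h1 := Nat.div_add_mod (i:ℕ) d
          omega
        · have h1 := Nat.div_add_mod (i:ℕ) d
          have h2 : (i:ℕ) % d < d := Nat.mod_lt _ hdpos
          have h3 : d * ((i:ℕ)/d + 1) = d * ((i:ℕ)/d) + d := by ring
          omega
        · have h1 := Nat.div_add_mod (j:ℕ) d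
          rw [hab]
          omega
        · have h1 := Nat.div_add_mod (j:ℕ) d
          have h2 : (j:ℕ) % d < d := Nat.mod_lt _ hdpos
          have h3 : d * ((i:ℕ)/d + 1) = d * ((j:ℕ)/d) + d := by rw [hab]; ring
          omega
      · rintro ⟨q, hq, h1, h2, h3, h4⟩
        have e1 : q * d = d * q := by ring
        have e2 : (q+1) * d = d * q + d := by ring
        have e3 : d * (q+1) = d * q + d := by ring
        have hia : (i:ℕ)/d = q :=
          Nat.div_eq_of_lt_le (by omega) (by omega)
        have hja : (j:ℕ)/d = q :=
          Nat.div_eq_of_lt_le (by omega) (by omega)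
        intro l
        set v := ((l:ℕ)*k) % n with hv
        have hdv : d ∣ v := by
          rw [hv, Nat.dvd_mod_iff hdn]
          exact Dvd.dvd.mul_left hdk _
        have hvn : v < n := Nat.mod_lt _ (by omega)
        have hvm : v / d < N := Nat.div_lt_div_of_lt_of_dvd hdn hvn
        have hveq : v = (v/d) * d := (Nat.div_mul_cancel hdv).symm
        refine (key l i l j).mpr ?_
        rw [← hv, hveq]
        have e1 := evalB n k (v/d) (i:ℕ) hn i.isLt hvm
        have e2 := evalB n k (v/d) (j:ℕ) hn j.isLt hvm
        rw [show (v/d) * d = (v/d) * Nat.gcd n k from rfl]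
        rw [← hd] at e1 e2
        rw [e1, e2, hia, hja]
end

section
/- Let n ≥ 1 and 1 ≤ k ≤ n, and regard the cyclic (n,k)-matrix M_{n,k} as an integer matrix. If gcd(n,k) = 1 then |det(M_{n,k})| = k; if gcd(n,k) ≥ 2 then det(M_{n,k}) = 0. -/
open Matrix Finset Polynomial

theorem IsPrimitiveRoot.pow_val_add {M : Type*} [CommMonoid M] {ζ : M} {n : ℕ}
    (hζ : IsPrimitiveRoot ζ n) (a b : Fin n) :
    ζ ^ ((a + b : Fin n) : ℕ) = ζ ^ (a : ℕ) * ζ ^ (b : ℕ) := by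
  rw [Fin.val_add, ← pow_add, ← pow_eq_pow_mod _ hζ.pow_eq_one]

theorem IsPrimitiveRoot.prod_one_sub_pow {R : Type*} [CommRing R] [IsDomain R] {ζ : R} {n : ℕ}
    [NeZero n] (hζ : IsPrimitiveRoot ζ n) : ∏ j ∈ Ico 1 n, (1 - ζ ^ j) = n := by
  have hpos : 0 < n := Nat.pos_of_neZero n
  have hsplit := X_pow_sub_C_eq_prod hζ hpos (one_pow n)
  rw [C_1, range_eq_Ico, prod_eq_prod_Ico_succ_bot hpos] at hsplit
  have hfactor :
      (X - 1) * ∏ j ∈ Ico 1 n, (X - C (ζ ^ j)) = (X - 1) * ∑ i ∈ range n, X ^ i := by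
    rw [mul_geom_sum, hsplit]
    simp
  have h := congrArg (eval 1) (mul_left_cancel₀ (X_sub_C_ne_zero (1 : R)) hfactor)
  simpa [eval_prod, eval_finsetSum] using h

theorem IsPrimitiveRoot.prod_geom_sum_pow {R : Type*} [CommRing R] [IsDomain R] [CharZero R]
    {ζ : R} {n k : ℕ} [NeZero n] (hζ : IsPrimitiveRoot ζ n) (hnk : n.Coprime k) :
    ∏ j ∈ range n, ∑ a ∈ range k, (ζ ^ j) ^ a = k := by
  have hpos : 0 < n := Nat.pos_of_neZero n
  have hn : (n : R) ≠ 0 := Nat.cast_ne_zero.mpr hpos.ne'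
  have hunit : ∏ j ∈ Ico 1 n, ∑ a ∈ range k, (ζ ^ j) ^ a = 1 := by
    apply mul_right_cancel₀ hn
    calc (∏ j ∈ Ico 1 n, ∑ a ∈ range k, (ζ ^ j) ^ a) * n
        = ∏ j ∈ Ico 1 n, (1 - (ζ ^ k) ^ j) := by
          rw [← hζ.prod_one_sub_pow, ← prod_mul_distrib]
          refine prod_congr rfl fun j _ => ?_
          rw [geom_sum_mul_neg, pow_right_comm]
      _ = 1 * n := by rw [(hζ.pow_of_coprime k hnk.symm).prod_one_sub_pow, one_mul]
  rw [range_eq_Ico, prod_eq_prod_Ico_succ_bot hpos, hunit]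
  simp

theorem Matrix.det_circulant {R : Type*} [CommRing R] [IsDomain R] {n : ℕ} [NeZero n] {ζ : R}
    (hζ : IsPrimitiveRoot ζ n) (v : Fin n → R) :
    (circulant v).det = ∏ j : Fin n, ∑ i : Fin n, v i * ζ ^ ((i : ℕ) * j) := by
  set F := vandermonde fun i : Fin n => ζ ^ (i : ℕ)
  have hF : F.det ≠ 0 :=
    det_vandermonde_ne_zero_iff.mpr fun i j h => Fin.ext (hζ.pow_inj i.2 j.2 h)
  have hdiag : (circulant v)ᵀ * F =
      F * diagonal fun j : Fin n => ∑ i : Fin n, v i * ζ ^ ((i : ℕ) * j) := by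
    ext r j
    rw [mul_diagonal, mul_apply, Finset.mul_sum]
    refine (Fintype.sum_equiv (Equiv.addRight r) _ _ fun i => ?_).symm
    simp only [F, transpose_apply, circulant_apply, vandermonde_apply, Equiv.coe_addRight,
      add_sub_cancel_right, hζ.pow_val_add, pow_mul]
    ring
  have hdet := congrArg det hdiag
  rw [det_mul, det_mul, det_transpose, det_diagonal, mul_comm] at hdet
  exact mul_left_cancel₀ hF hdet

theorem Matrix.det_submatrix_eq_zero_of_not_injective {ι R : Type*} [Fintype ι] [DecidableEq ι]
    [CommRing R] (A : Matrix ι ι R) {f : ι → ι} (hf : ¬Function.Injective f) :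
    (A.submatrix f id).det = 0 := by
  obtain ⟨i, j, hfij, hij⟩ : ∃ i j, f i = f j ∧ i ≠ j := by
    simpa [Function.Injective] using hf
  exact det_zero_of_row_eq hij (by ext; simp [hfij])

theorem Fin.exists_lt_modEq_add_iff {n : ℕ} [NeZero n] (k : ℕ) (r j : Fin n) :
    (∃ a < k, (j : ℕ) ≡ r + a [MOD n]) ↔ ((j - r : Fin n) : ℕ) < k := by
  have hj : (j : ℕ) ≡ r + ((j - r : Fin n) : ℕ) [MOD n] := by
    have h := congrArg Fin.val (sub_add_cancel j r)
    rw [Fin.val_add, add_comm] at h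
    rw [Nat.ModEq, h, Nat.mod_eq_of_lt j.2]
  refine ⟨fun ⟨a, ha, h⟩ => ?_, fun h => ⟨_, h, hj⟩⟩
  have ha' := Nat.mod_eq_of_modEq (Nat.ModEq.add_left_cancel' _ (h.symm.trans hj)) (Fin.is_lt _)
  exact ha' ▸ (Nat.mod_le a n).trans_lt ha

theorem Fin.ofNat_val_mul_injective_iff {n : ℕ} [NeZero n] (k : ℕ) :
    Function.Injective (fun i : Fin n => Fin.ofNat n (i * k)) ↔ n.Coprime k := by
  have hpos : 0 < n := Nat.pos_of_neZero n
  constructor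
  · intro hinj
    by_contra hnk
    set d := n.gcd k
    have hd : 1 < d := lt_of_le_of_ne (Nat.gcd_pos_of_pos_left k hpos) (Ne.symm hnk)
    -- `n / d` is a nonzero residue with `(n / d) * k = n * (k / d) ≡ 0`
    have hmk : n ∣ n / d * k := by
      rw [← Nat.mul_div_cancel' (Nat.gcd_dvd_right n k), ← mul_assoc,
        Nat.div_mul_cancel (Nat.gcd_dvd_left n k)]
      exact dvd_mul_right n _
    have h0 := @hinj ⟨n / d, Nat.div_lt_self hpos hd⟩ 0
      (Fin.ext (by simp [Nat.mod_eq_zero_of_dvd hmk]))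
    exact (Nat.div_pos (Nat.gcd_le_left k hpos) (by omega)).ne' (congrArg Fin.val h0)
  · intro hnk i i' h
    have h' : (i : ℕ) * k ≡ i' * k [MOD n] := congrArg Fin.val h
    exact Fin.ext ((Nat.mod_eq_of_lt i.2).symm.trans
      (Nat.mod_eq_of_modEq (Nat.ModEq.cancel_right_of_coprime hnk h') i'.2))

theorem det_circulant_indicator_lt {n k : ℕ} [NeZero n] (hk : k ≤ n) (hnk : n.Coprime k) :
    (circulant fun t : Fin n => if (t : ℕ) < k then (1 : ℤ) else 0).det = k := by
  set ζ : ℂ := Complex.exp (2 * Real.pi * Complex.I / n)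
  have hζ : IsPrimitiveRoot ζ n := Complex.isPrimitiveRoot_exp n (NeZero.ne n)
  apply Int.cast_injective (α := ℂ)
  rw [Int.cast_natCast, ← eq_intCast (Int.castRingHom ℂ), RingHom.map_det,
    RingHom.mapMatrix_apply, map_circulant, det_circulant hζ, ← hζ.prod_geom_sum_pow hnk,
    ← Fin.prod_univ_eq_prod_range]
  refine prod_congr rfl fun j _ => ?_
  simp only [apply_ite (Int.castRingHom ℂ), map_one, map_zero, ite_mul, one_mul, zero_mul,
    ← pow_mul, mul_comm (j : ℕ)]
  rw [Fin.sum_univ_eq_sum_range (fun i => if i < k then ζ ^ (i * (j : ℕ)) else 0),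
    ← sum_filter]
  congr 1
  ext a
  simp only [mem_filter, mem_range]
  omega

theorem cyc_eq_ite {n : ℕ} [NeZero n] (k : ℕ) (i j : Fin n) :
    cyc n k i j = if ((j - Fin.ofNat n (i * k) : Fin n) : ℕ) < k then 1 else 0 := by
  have hik : ∀ a, (i : ℕ) * k + a ≡ (Fin.ofNat n (i * k) : ℕ) + a [MOD n] := fun a =>
    Nat.ModEq.add_right a (by rw [Fin.val_ofNat]; exact (Nat.mod_modEq _ n).symm)
  unfold cyc
  refine if_congr ?_ rfl rfl
  rw [← Fin.exists_lt_modEq_add_iff]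
  exact exists_congr fun a => and_congr_right fun _ =>
    ⟨fun h => h.trans (hik a), fun h => h.trans (hik a).symm⟩

theorem cyc_eq_submatrix_circulant {n : ℕ} [NeZero n] (k : ℕ) :
    (of fun i j : Fin n => (cyc n k i j : ℤ)) =
      (circulant fun t : Fin n => if (t : ℕ) < k then (1 : ℤ) else 0)ᵀ.submatrix
        (fun i : Fin n => Fin.ofNat n (i * k)) id := by
  ext i j
  simp [cyc_eq_ite, apply_ite]

theorem stmt_17_general (n k : ℕ) (hn : 1 ≤ n) (hk : k ≤ n) :
    (Nat.gcd n k = 1 →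
      (Matrix.det (Matrix.of fun i j : Fin n => (cyc n k i j : ℤ))).natAbs = k) ∧
    (2 ≤ Nat.gcd n k →
      Matrix.det (Matrix.of fun i j : Fin n => (cyc n k i j : ℤ)) = 0) := by
  have : NeZero n := ⟨by omega⟩
  rw [cyc_eq_submatrix_circulant]
  refine ⟨fun hnk => ?_, fun hnk => ?_⟩
  · have hσ := (Fin.ofNat_val_mul_injective_iff k).2 hnk
    rw [show (fun i : Fin n => Fin.ofNat n (i * k)) = Equiv.ofBijective _ hσ.bijective_of_finite
      from rfl, det_permute, det_transpose, det_circulant_indicator_lt hk hnk]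
    simp [Int.natAbs_mul]
  · refine det_submatrix_eq_zero_of_not_injective _ fun hσ => ?_
    have := (Fin.ofNat_val_mul_injective_iff k).1 hσ
    unfold Nat.Coprime at this
    omega

/-- regarding the cyclic `(n,k)`-matrix as an integer matrix, its
determinant has absolute value `k` when `gcd(n,k) = 1`, and is `0` when
`gcd(n,k) ≥ 2`. -/
theorem stmt_17 (n k : ℕ) (hn : 1 ≤ n) (hk1 : 1 ≤ k) (hk : k ≤ n) :
    (Nat.gcd n k = 1 →
      (Matrix.det (Matrix.of fun i j : Fin n => (cyc n k i j : ℤ))).natAbs = k) ∧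
    (2 ≤ Nat.gcd n k →
      Matrix.det (Matrix.of fun i j : Fin n => (cyc n k i j : ℤ)) = 0) :=
  stmt_17_general n k hn hk
end

section
/- Let M = M_{n,k} = (m_{i,j}) be the cyclic (n,k)-matrix. Then any two columns of M represent the same cyclic sequence: for all 0 ≤ j, j' ≤ n−1 there exists an integer r such that m_{i,j} = m_{(i+r) mod n, j'} for every 0 ≤ i ≤ n−1. -/
namespace Int

theorem emod_mul_right_ediv_self (z : ℤ) {d : ℤ} (hd : 0 < d) (n : ℤ) :
    z % (d * n) / d = z / d % n := by
  rw [emod_def, emod_def (z / d),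
    show z - d * n * (z / (d * n)) = z + d * (-n * (z / (d * n))) by ring,
    add_mul_ediv_left _ _ hd.ne', Int.ediv_mul_of_nonneg hd.le]
  ring

theorem emod_lt_iff_ediv_emod_lt (z : ℤ) {d n k : ℤ} (hd : 0 < d) (hdn : d ∣ n) (hdk : d ∣ k) :
    z % n < k ↔ z / d % (n / d) < k / d := by
  obtain ⟨n', rfl⟩ := hdn
  rw [mul_ediv_cancel_left _ hd.ne', ← emod_mul_right_ediv_self _ hd, Int.ediv_lt_iff_lt_mul hd,
    Int.ediv_mul_cancel hdk]

theorem exists_natCast_mul_modEq {a n : ℤ} (hn : n ≠ 0) (h : IsCoprime a n) (c : ℤ) :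
    ∃ r : ℕ, r * a ≡ c [ZMOD n] := by
  obtain ⟨u, v, huv⟩ := h
  refine ⟨(u * c % n).toNat, ?_⟩
  rw [toNat_of_nonneg (emod_nonneg _ hn)]
  calc u * c % n * a ≡ u * c * a [ZMOD n] := (mod_modEq _ _).mul_right _
    _ ≡ c [ZMOD n] := modEq_iff_dvd.mpr ⟨v * c, by linear_combination -c * huv⟩

theorem exists_shift_emod_lt_iff {n : ℤ} (hn : n ≠ 0) (k j j' : ℤ) :
    ∃ r : ℕ, ∀ i : ℤ, (j - i * k) % n < k ↔ (j' - (i + r) * k) % n < k := by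
  obtain ⟨d, hd_def⟩ : ∃ d : ℤ, d = k.gcd n := ⟨_, rfl⟩
  have hd : 0 < d := hd_def ▸ mod_cast gcd_pos_of_ne_zero_right k hn
  have hdk : d ∣ k := hd_def ▸ gcd_dvd_left k n
  have hdn : d ∣ n := hd_def ▸ gcd_dvd_right k n
  have hn' : n / d ≠ 0 := fun h => hn (by rw [← Int.ediv_mul_cancel hdn, h, zero_mul])
  have hcop : IsCoprime (k / d) (n / d) := by
    simpa only [hd_def, coe_gcd] using isCoprime_div_gcd_div_gcd (p := k) hn
  obtain ⟨r, hr⟩ := exists_natCast_mul_modEq hn' hcop (j' / d - j / d)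
  have quot (x i : ℤ) : (x - i * k) / d = x / d - i * (k / d) := by
    rw [sub_ediv_of_dvd _ (hdk.mul_left i), Int.mul_ediv_assoc _ hdk]
  refine ⟨r, fun i => ?_⟩
  rw [emod_lt_iff_ediv_emod_lt _ hd hdn hdk, emod_lt_iff_ediv_emod_lt _ hd hdn hdk, quot, quot]
  suffices j / d - i * (k / d) ≡ j' / d - (i + r) * (k / d) [ZMOD n / d] by rw [this]
  obtain ⟨e, he⟩ := modEq_iff_dvd.mp hr
  exact modEq_iff_dvd.mpr ⟨e, by linear_combination he⟩

theorem exists_lt_modEq_iff_emod_lt {n : ℕ} (hn : n ≠ 0) (k j m : ℕ) :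
    (∃ a < k, j ≡ m + a [MOD n]) ↔ ((j : ℤ) - m) % n < k := by
  have hn' : (n : ℤ) ≠ 0 := by exact_mod_cast hn
  constructor
  · rintro ⟨a, ha, h⟩
    have h' : (j : ℤ) - m ≡ a [ZMOD n] := by
      simpa using (natCast_modEq_iff.mpr h).sub_right (m : ℤ)
    rw [h', ← natCast_mod]
    exact_mod_cast (Nat.mod_le a n).trans_lt ha
  · intro h
    have hnonneg := emod_nonneg ((j : ℤ) - m) hn'
    refine ⟨((j - m : ℤ) % n).toNat, by omega, natCast_modEq_iff.mp ?_⟩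
    rw [Nat.cast_add, toNat_of_nonneg hnonneg]
    calc (j : ℤ) = m + (j - m) := by ring
      _ ≡ m + (j - m) % n [ZMOD n] := ((mod_modEq _ _).add_left _).symm

end Int

theorem cyc_eq_ite_emod_lt {n : ℕ} (k : ℕ) (i j : Fin n) :
    cyc n k i j = if ((j : ℤ) - i * k) % n < k then 1 else 0 := by
  unfold cyc
  exact if_congr (by rw [Int.exists_lt_modEq_iff_emod_lt (Fin.pos i).ne', Nat.cast_mul]) rfl rfl

/-- any two columns of the cyclic `(n,k)`-matrix represent the same
cyclic sequence: for columns `j, j'` there is a shift `r` with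
`m_{i,j} = m_{(i+r) mod n, j'}` for every `i`. -/
theorem stmt_18 (n k : ℕ) (hn : 1 ≤ n) (j j' : Fin n) :
    ∃ r : ℕ, ∀ i : Fin n,
      cyc n k i j = cyc n k ⟨((i : ℕ) + r) % n, Nat.mod_lt _ (by omega)⟩ j' := by
  obtain ⟨r, hr⟩ := Int.exists_shift_emod_lt_iff (n := n) (by omega) k j j'
  refine ⟨r, fun i => ?_⟩
  have hshift : (((i + r) % n : ℕ) : ℤ) ≡ i + r [ZMOD n] := by
    push_cast
    exact Int.mod_modEq _ _
  rw [cyc_eq_ite_emod_lt, cyc_eq_ite_emod_lt, Fin.val_mk, (hshift.mul_right (k : ℤ)).sub_left _]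
  exact if_congr (hr i) rfl rfl
end

section
/- For all integers n ≥ 1 and 0 ≤ k ≤ n, the transpose M_{n,k}^T of the cyclic (n,k)-matrix is k-uniform and optimal. -/
section Stmt19Aux

variable {n k : ℕ}

/-- Convert an element of `ZMod n` to `Fin n`. -/
noncomputable def toF (n : ℕ) [NeZero n] (x : ZMod n) : Fin n := ⟨x.val, ZMod.val_lt x⟩

lemma cast_val' [NeZero n] (x : ZMod n) : ((x.val : ℕ) : ZMod n) = x :=
  ZMod.natCast_rightInverse x

lemma cast_toF [NeZero n] (x : ZMod n) : (((toF n x : Fin n) : ℕ) : ZMod n) = x :=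
  ZMod.natCast_rightInverse x

lemma toF_coe [NeZero n] (i : Fin n) : toF n ((i : ℕ) : ZMod n) = i := by
  apply Fin.ext
  simp [toF, ZMod.val_cast_of_lt i.isLt]

lemma val_eq_of_eq [NeZero n] {x : ZMod n} {m : ℕ} (h : x = (m : ℕ)) (hm : m < n) :
    x.val = m := by rw [h, ZMod.val_cast_of_lt hm]

lemma cyc_eq [NeZero n] (hk : k ≤ n) (i j : Fin n) :
    cyc n k j i = if (((i : ℕ) : ZMod n) - ((j : ℕ) : ZMod n) * k).val < k then 1 else 0 := by
  unfold cyc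
  refine if_congr ?_ rfl rfl
  constructor
  · rintro ⟨a, ha, hmod⟩
    have h2 : ((i : ℕ) : ZMod n) = (((j : ℕ) * k + a : ℕ) : ZMod n) :=
      (ZMod.natCast_eq_natCast_iff _ _ _).mpr hmod
    push_cast at h2
    have h3 : ((i : ℕ) : ZMod n) - ((j : ℕ) : ZMod n) * k = (a : ZMod n) := by
      rw [h2]; ring
    rw [h3, ZMod.val_cast_of_lt (lt_of_lt_of_le ha hk)]
    exact ha
  · intro h
    refine ⟨(((i : ℕ) : ZMod n) - ((j : ℕ) : ZMod n) * k).val, h, ?_⟩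
    apply (ZMod.natCast_eq_natCast_iff _ _ _).mp
    push_cast
    rw [cast_val']
    ring

lemma cyc_one_iff [NeZero n] (hk : k ≤ n) (i j : Fin n) :
    cyc n k j i = 1 ↔ (((i : ℕ) : ZMod n) - ((j : ℕ) : ZMod n) * k).val < k := by
  rw [cyc_eq hk]
  split_ifs with h
  · simpa using h
  · simpa using h

lemma col_card [NeZero n] (hk : k ≤ n) (c : ZMod n) :
    (Finset.univ.filter fun i : Fin n => (((i : ℕ) : ZMod n) - c).val < k).card = k := by
  refine Eq.trans ?_ (Finset.card_range k)
  refine Finset.card_bij' (fun i _ => (((i : ℕ) : ZMod n) - c).val)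
    (fun a _ => toF n ((a : ZMod n) + c)) ?_ ?_ ?_ ?_
  · intro i hi
    simp only [Finset.mem_filter] at hi
    exact Finset.mem_range.mpr hi.2
  · intro a ha
    simp only [Finset.mem_filter, Finset.mem_univ, true_and]
    rw [cast_toF]
    have h1 : (a : ZMod n) + c - c = (a : ZMod n) := by ring
    rw [h1, ZMod.val_cast_of_lt (lt_of_lt_of_le (Finset.mem_range.mp ha) hk)]
    exact Finset.mem_range.mp ha
  · intro i hi
    show toF n ((((((i : ℕ) : ZMod n) - c).val : ℕ) : ZMod n) + c) = i
    have h1 : (((i : ℕ) : ZMod n) - c : ZMod n) + c = ((i : ℕ) : ZMod n) := by ring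
    rw [cast_val', h1, toF_coe]
  · intro a ha
    show ((((toF n ((a : ZMod n) + c) : Fin n) : ℕ) : ZMod n) - c).val = a
    rw [cast_toF]
    have h1 : (a : ZMod n) + c - c = (a : ZMod n) := by ring
    rw [h1, ZMod.val_cast_of_lt (lt_of_lt_of_le (Finset.mem_range.mp ha) hk)]

end Stmt19Aux

/-- Number of ones in "row `c`" (as an element of `ZMod n`) of the transposed cyclic matrix. -/
noncomputable def rowN (n k : ℕ) (c : ZMod n) : ℕ :=
  (Finset.univ.filter fun j : Fin n => (c - ((j : ℕ) : ZMod n) * (k : ZMod n)).val < k).card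

lemma rowN_succ [NeZero n] (hk : k ≤ n) (hk1 : 1 ≤ k) (c : ZMod n) :
    rowN n k (c + 1) = rowN n k c := by
  have hkn : k - 1 < n := by omega
  have h0n : 0 < n := Nat.pos_of_ne_zero (NeZero.ne n)
  unfold rowN
  refine Finset.card_bij'
    (fun j _ => if ((c + 1) - ((j : ℕ) : ZMod n) * (k : ZMod n)).val = 0
      then toF n (((j : ℕ) : ZMod n) - 1) else j)
    (fun j _ => if (c - ((j : ℕ) : ZMod n) * (k : ZMod n)).val = k - 1
      then toF n (((j : ℕ) : ZMod n) + 1) else j) ?_ ?_ ?_ ?_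
  · intro j hj
    simp only [Finset.mem_filter, Finset.mem_univ, true_and] at hj ⊢
    set u := ((j : ℕ) : ZMod n) with hu
    split_ifs with h0
    · rw [cast_toF]
      have h00 : c + 1 - u * (k : ZMod n) = 0 := by
        rw [← cast_val' (c + 1 - u * (k : ZMod n)), h0, Nat.cast_zero]
      have he : c - (u - 1) * (k : ZMod n) = ((k - 1 : ℕ) : ZMod n) := by
        rw [Nat.cast_sub hk1]; push_cast; linear_combination h00
      rw [val_eq_of_eq he hkn]; omega
    · have hb1 : c - u * (k : ZMod n)
          = (((c + 1 - u * (k : ZMod n)).val - 1 : ℕ) : ZMod n) := by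
        rw [Nat.cast_sub (Nat.one_le_iff_ne_zero.mpr h0), cast_val']; push_cast; ring
      rw [val_eq_of_eq hb1 (by omega)]
      omega
  · intro j hj
    simp only [Finset.mem_filter, Finset.mem_univ, true_and] at hj ⊢
    set u := ((j : ℕ) : ZMod n) with hu
    split_ifs with h0
    · rw [cast_toF]
      have hA : c - u * (k : ZMod n) = (k : ZMod n) - 1 := by
        rw [← cast_val' (c - u * (k : ZMod n)), h0, Nat.cast_sub hk1]; push_cast; ring
      have he : c + 1 - (u + 1) * (k : ZMod n) = 0 := by linear_combination hA
      rw [val_eq_of_eq (by rw [he]; simp) h0n]; omega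
    · have hb1 : c + 1 - u * (k : ZMod n)
          = (((c - u * (k : ZMod n)).val + 1 : ℕ) : ZMod n) := by
        push_cast; rw [cast_val']; ring
      rw [val_eq_of_eq hb1 (by omega)]
      omega
  · intro j hj
    simp only [Finset.mem_filter, Finset.mem_univ, true_and] at hj
    set u := ((j : ℕ) : ZMod n) with hu
    by_cases h0 : (c + 1 - u * (k : ZMod n)).val = 0
    · rw [if_pos h0]
      have h00 : c + 1 - u * (k : ZMod n) = 0 := by
        rw [← cast_val' (c + 1 - u * (k : ZMod n)), h0, Nat.cast_zero]
      have he : c - (u - 1) * (k : ZMod n) = ((k - 1 : ℕ) : ZMod n) := by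
        rw [Nat.cast_sub hk1]; push_cast; linear_combination h00
      have hcond : (c - (((toF n (u - 1) : Fin n) : ℕ) : ZMod n) * (k : ZMod n)).val = k - 1 := by
        rw [cast_toF]; exact val_eq_of_eq he hkn
      rw [if_pos hcond, cast_toF]
      have h2 : u - 1 + 1 = u := by ring
      rw [h2, hu, toF_coe]
    · rw [if_neg h0]
      have hb1 : c - u * (k : ZMod n)
          = (((c + 1 - u * (k : ZMod n)).val - 1 : ℕ) : ZMod n) := by
        rw [Nat.cast_sub (Nat.one_le_iff_ne_zero.mpr h0), cast_val']; push_cast; ring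
      have hv := val_eq_of_eq hb1 (by omega)
      rw [if_neg (by rw [hv]; omega)]
  · intro j hj
    simp only [Finset.mem_filter, Finset.mem_univ, true_and] at hj
    set u := ((j : ℕ) : ZMod n) with hu
    by_cases h0 : (c - u * (k : ZMod n)).val = k - 1
    · rw [if_pos h0]
      have hA : c - u * (k : ZMod n) = (k : ZMod n) - 1 := by
        rw [← cast_val' (c - u * (k : ZMod n)), h0, Nat.cast_sub hk1]; push_cast; ring
      have he : c + 1 - (u + 1) * (k : ZMod n) = 0 := by linear_combination hA
      have hcond : (c + 1 - (((toF n (u + 1) : Fin n) : ℕ) : ZMod n) * (k : ZMod n)).val = 0 := by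
        rw [cast_toF]; exact val_eq_of_eq (by rw [he]; simp) h0n
      rw [if_pos hcond, cast_toF]
      have h2 : u + 1 - 1 = u := by ring
      rw [h2, hu, toF_coe]
    · rw [if_neg h0]
      have hb1 : c + 1 - u * (k : ZMod n)
          = (((c - u * (k : ZMod n)).val + 1 : ℕ) : ZMod n) := by
        push_cast; rw [cast_val']; ring
      have hv := val_eq_of_eq hb1 (by omega)
      rw [if_neg (by rw [hv]; omega)]

lemma rowN_const [NeZero n] (hk : k ≤ n) (hk1 : 1 ≤ k) (c : ZMod n) :
    rowN n k c = rowN n k 0 := by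
  have key : ∀ m : ℕ, rowN n k (m : ZMod n) = rowN n k 0 := by
    intro m
    induction m with
    | zero => simp
    | succ m ih =>
        have h1 : ((m + 1 : ℕ) : ZMod n) = ((m : ℕ) : ZMod n) + 1 := by push_cast; ring
        rw [h1, rowN_succ hk hk1, ih]
  rw [← cast_val' c]
  exact key c.val

lemma rowN_eq_k [NeZero n] (hk : k ≤ n) (hk1 : 1 ≤ k) : rowN n k (0 : ZMod n) = k := by
  have h0n : 0 < n := Nat.pos_of_ne_zero (NeZero.ne n)
  have hcol : ∀ j : Fin n, (Finset.univ.filter fun i : Fin n => cyc n k j i = 1).card = k := by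
    intro j
    have h1 : (Finset.univ.filter fun i : Fin n => cyc n k j i = 1)
        = Finset.univ.filter fun i : Fin n =>
            (((i : ℕ) : ZMod n) - ((j : ℕ) : ZMod n) * (k : ZMod n)).val < k :=
      Finset.filter_congr fun i _ => cyc_one_iff hk i j
    rw [h1]
    exact col_card hk _
  have hrow : ∀ i : Fin n,
      (Finset.univ.filter fun j : Fin n => cyc n k j i = 1).card = rowN n k 0 := by
    intro i
    have h1 : (Finset.univ.filter fun j : Fin n => cyc n k j i = 1)
        = Finset.univ.filter fun j : Fin n =>
            (((i : ℕ) : ZMod n) - ((j : ℕ) : ZMod n) * (k : ZMod n)).val < k :=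
      Finset.filter_congr fun j _ => cyc_one_iff hk i j
    rw [h1]
    exact rowN_const hk hk1 _
  have hsum : ∑ i : Fin n, (Finset.univ.filter fun j : Fin n => cyc n k j i = 1).card
      = ∑ j : Fin n, (Finset.univ.filter fun i : Fin n => cyc n k j i = 1).card := by
    simp only [Finset.card_filter]
    exact Finset.sum_comm
  rw [Finset.sum_congr rfl fun i _ => hrow i, Finset.sum_congr rfl fun j _ => hcol j] at hsum
  simp only [Finset.sum_const, Finset.card_univ, Fintype.card_fin, smul_eq_mul] at hsum
  exact Nat.eq_of_mul_eq_mul_left h0n hsum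

lemma uniform_aux [NeZero n] (hk : k ≤ n) (hk1 : 1 ≤ k) :
    IsUniform k (fun i j => cyc n k j i) := by
  constructor
  · intro i
    have h1 : (Finset.univ.filter fun j : Fin n => cyc n k j i = 1)
        = Finset.univ.filter fun j : Fin n =>
            (((i : ℕ) : ZMod n) - ((j : ℕ) : ZMod n) * (k : ZMod n)).val < k :=
      Finset.filter_congr fun j _ => cyc_one_iff hk i j
    rw [h1]
    exact (rowN_const hk hk1 _).trans (rowN_eq_k hk hk1)
  · intro j
    have h1 : (Finset.univ.filter fun i : Fin n => cyc n k j i = 1)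
        = Finset.univ.filter fun i : Fin n =>
            (((i : ℕ) : ZMod n) - ((j : ℕ) : ZMod n) * (k : ZMod n)).val < k :=
      Finset.filter_congr fun i _ => cyc_one_iff hk i j
    rw [h1]
    exact col_card hk _

lemma rowSum_eq [NeZero n] (hk : k ≤ n) (i : Fin n) (j : ℕ) (hj : j < n) :
    RowSum (fun i j => cyc n k j i) i ⟨j, hj⟩
      = ∑ m ∈ Finset.range (j + 1),
          (if (((i : ℕ) : ZMod n) - (m : ZMod n) * (k : ZMod n)).val < k then 1 else 0) := by
  unfold RowSum
  refine Finset.sum_bij' (fun l _ => (l : ℕ))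
    (fun m hm => (⟨m, lt_of_le_of_lt (Nat.lt_succ_iff.mp (Finset.mem_range.mp hm)) hj⟩ : Fin n))
    ?_ ?_ ?_ ?_ ?_
  · intro l hl
    rw [Finset.mem_range, Nat.lt_succ_iff]
    exact Fin.le_def.mp (Finset.mem_Iic.mp hl)
  · intro m hm
    rw [Finset.mem_Iic]
    exact Fin.le_def.mpr (Nat.lt_succ_iff.mp (Finset.mem_range.mp hm))
  · intro l hl
    exact Fin.ext rfl
  · intro m hm
    rfl
  · intro l hl
    exact cyc_eq hk i l

/-- for all `n ≥ 1` and `0 ≤ k ≤ n`, the transpose of the cyclic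
`(n,k)`-matrix is `k`-uniform and optimal. -/
theorem stmt_19 (n k : ℕ) (hn : 1 ≤ n) (hk : k ≤ n) :
    IsUniform k (fun i j => cyc n k j i) ∧ Optimal (fun i j => cyc n k j i) := by
  haveI : NeZero n := ⟨by omega⟩
  rcases Nat.eq_zero_or_pos k with rfl | hk1
  · -- degenerate case k = 0
    have hz : ∀ i j : Fin n, cyc n 0 j i = 0 := by
      intro i j
      simp [cyc]
    have hU : IsUniform 0 (fun i j => cyc n 0 j i) := by
      constructor <;> intro x <;>
        · rw [Finset.card_eq_zero, Finset.filter_eq_empty_iff]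
          intro y _
          simp [hz]
    refine ⟨hU, ⟨0, hU⟩, ?_⟩
    intro j hj
    refine ⟨id, ?_, ?_⟩
    · show Set.BijOn id {i : Fin n | cyc n 0 ⟨j, Nat.lt_of_succ_lt hj⟩ i = 1}
        {i : Fin n | cyc n 0 ⟨j + 1, hj⟩ i = 1}
      have h1 : {i : Fin n | cyc n 0 ⟨j, Nat.lt_of_succ_lt hj⟩ i = 1} = ∅ := by
        ext i; simp [hz]
      have h2 : {i : Fin n | cyc n 0 ⟨j + 1, hj⟩ i = 1} = ∅ := by
        ext i; simp [hz]
      rw [h1, h2]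
      exact Set.bijOn_empty id
    · intro i hi
      exact absurd hi (by simp [hz])
  · -- main case 1 ≤ k
    have hU : IsUniform k (fun i j => cyc n k j i) := uniform_aux hk hk1
    refine ⟨hU, ⟨k, hU⟩, ?_⟩
    intro j hj
    have hjn : j < n := Nat.lt_of_succ_lt hj
    refine ⟨fun i => toF n (((i : ℕ) : ZMod n) + (k : ZMod n)), ⟨?_, ?_, ?_⟩, ?_⟩
    · -- MapsTo
      intro i hi
      simp only [Set.mem_setOf_eq] at hi ⊢
      rw [cyc_one_iff hk] at hi ⊢
      rw [cast_toF]
      have he : ((i : ℕ) : ZMod n) + (k : ZMod n)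
            - (((j + 1 : ℕ) : ZMod n)) * (k : ZMod n)
          = ((i : ℕ) : ZMod n) - ((j : ℕ) : ZMod n) * (k : ZMod n) := by
        push_cast; ring
      rw [show (((⟨j + 1, hj⟩ : Fin n) : ℕ) : ZMod n) = ((j + 1 : ℕ) : ZMod n) from rfl, he]
      exact hi
    · -- InjOn
      intro i hi i' hi' h
      have h2 : ((i : ℕ) : ZMod n) + (k : ZMod n) = ((i' : ℕ) : ZMod n) + (k : ZMod n) := by
        have h4 := congrArg (fun z : Fin n => ((z : ℕ) : ZMod n)) h
        simp only [cast_toF] at h4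
        exact h4
      have h3 : ((i : ℕ) : ZMod n) = ((i' : ℕ) : ZMod n) := by linear_combination h2
      apply Fin.ext
      rw [← ZMod.val_cast_of_lt i.isLt, ← ZMod.val_cast_of_lt i'.isLt, h3]
    · -- SurjOn
      intro i' hi'
      simp only [Set.mem_setOf_eq] at hi'
      rw [cyc_one_iff hk] at hi'
      refine ⟨toF n (((i' : ℕ) : ZMod n) - (k : ZMod n)), ?_, ?_⟩
      · simp only [Set.mem_setOf_eq]
        rw [cyc_one_iff hk, cast_toF]
        have he : ((i' : ℕ) : ZMod n) - (k : ZMod n) - ((j : ℕ) : ZMod n) * (k : ZMod n)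
            = ((i' : ℕ) : ZMod n) - ((j + 1 : ℕ) : ZMod n) * (k : ZMod n) := by
          push_cast; ring
        rw [show (((⟨j, hjn⟩ : Fin n) : ℕ) : ZMod n) = ((j : ℕ) : ZMod n) from rfl, he]
        exact hi'
      · show toF n ((((toF n (((i' : ℕ) : ZMod n) - (k : ZMod n)) : Fin n) : ℕ) : ZMod n)
            + (k : ZMod n)) = i'
        rw [cast_toF]
        have he : ((i' : ℕ) : ZMod n) - (k : ZMod n) + (k : ZMod n) = ((i' : ℕ) : ZMod n) := by
          ring
        rw [he, toF_coe]
    · -- Cond2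
      intro i hi
      simp only at hi
      have hiv := (cyc_one_iff hk i ⟨j, hjn⟩).mp hi
      have hrw1 := rowSum_eq hk (toF n (((i : ℕ) : ZMod n) + (k : ZMod n))) j hjn
      have hrw2 := rowSum_eq hk i j hjn
      rw [hrw1, hrw2]
      simp only [cast_toF]
      have hstep : ∀ m : ℕ,
          (if ((((i : ℕ) : ZMod n) + (k : ZMod n)) - ((m + 1 : ℕ) : ZMod n) * (k : ZMod n)).val < k
            then 1 else 0)
          = (if (((i : ℕ) : ZMod n) - (m : ZMod n) * (k : ZMod n)).val < k then (1:ℕ) else 0) := by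
        intro m
        refine if_congr ?_ rfl rfl
        have he : (((i : ℕ) : ZMod n) + (k : ZMod n)) - ((m + 1 : ℕ) : ZMod n) * (k : ZMod n)
            = ((i : ℕ) : ZMod n) - (m : ZMod n) * (k : ZMod n) := by
          push_cast; ring
        rw [he]
      rw [Finset.sum_range_succ'
        (fun m => if ((((i : ℕ) : ZMod n) + (k : ZMod n)) - (m : ZMod n) * (k : ZMod n)).val < k
          then 1 else 0) j]
      rw [Finset.sum_range_succ
        (fun m => if (((i : ℕ) : ZMod n) - (m : ZMod n) * (k : ZMod n)).val < k then 1 else 0) j]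
      rw [Finset.sum_congr rfl fun m _ => hstep m]
      have hgj : (if (((i : ℕ) : ZMod n) - ((j : ℕ) : ZMod n) * (k : ZMod n)).val < k
          then (1:ℕ) else 0) = 1 := if_pos hiv
      rw [hgj]
      have hf0 : (if ((((i : ℕ) : ZMod n) + (k : ZMod n)) - ((0:ℕ) : ZMod n) * (k : ZMod n)).val < k
          then (1:ℕ) else 0) ≤ 1 := by split_ifs <;> omega
      omega
end
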